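/- arXiv:2202.09776 — 15 statements merged into one kernel-verified Lean document; each statement's English description precedes it below -/
import Mathlib

section
/- Let R be a commutative ring, N an R-module, L ⊆ N a submodule and g ∈ R. Then Nat.card(N/gN) = Nat.card((N/L)/g·(N/L)) · Nat.card(L/(L ∩ gN)), where gN denotes the submodule {g·x : x ∈ N} and g·(N/L) the corresponding submodule of N/L. -/
/-- Lemma (Miles): for `R`-modules `L ⊆ N` and `g ∈ R`,
`|N/gN| = |(N/L)/g(N/L)| · |L/(L ∩ gN)|`. -/
theorem card_quotient_smul_eq_mul
    {R : Type*} [CommRing R] {N : Type*} [AddCommGroup N] [Module R N]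
    (L : Submodule R N) (g : R) :
    Nat.card (N ⧸ LinearMap.range (LinearMap.lsmul R N g)) =
      Nat.card ((N ⧸ L) ⧸ LinearMap.range (LinearMap.lsmul R (N ⧸ L) g)) *
        Nat.card
          (↥L ⧸ Submodule.comap L.subtype
            (L ⊓ LinearMap.range (LinearMap.lsmul R N g))) := by
  set gN := LinearMap.range (LinearMap.lsmul R N g) with hgN
  -- key: image of gN in N⧸L is g•(N⧸L)
  have hmap : Submodule.map L.mkQ gN = LinearMap.range (LinearMap.lsmul R (N ⧸ L) g) := by
    have h1 : L.mkQ.comp (LinearMap.lsmul R N g)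
        = (LinearMap.lsmul R (N ⧸ L) g).comp L.mkQ := by
      ext x; simp
    rw [hgN, ← LinearMap.range_comp, h1, LinearMap.range_comp, Submodule.range_mkQ,
      Submodule.map_top]
  have key := Submodule.card_quotient_mul_card_quotient (L ⊔ gN) gN le_sup_right
  -- identify the middle quotient
  have e1 : (N ⧸ (L ⊔ gN)) ≃ₗ[R]
      ((N ⧸ L) ⧸ LinearMap.range (LinearMap.lsmul R (N ⧸ L) g)) := by
    exact ((Submodule.quotEquivOfEq _ _ hmap.symm) ≪≫ₗ
      Submodule.quotientQuotientEquivQuotientSup L gN).symm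
  -- identify the subgroup with L / (L ⊓ gN)
  have e2 : ((L ⊔ gN).map gN.mkQ) ≃ₗ[R]
      (↥L ⧸ Submodule.comap L.subtype (L ⊓ gN)) := by
    have hLmap : Submodule.map gN.mkQ (L ⊔ gN) = Submodule.map gN.mkQ L := by
      rw [Submodule.map_sup, Submodule.mkQ_map_self, sup_bot_eq]
    have hrange : LinearMap.range (gN.mkQ.comp L.subtype) = Submodule.map gN.mkQ L := by
      rw [LinearMap.range_comp, Submodule.range_subtype]
    have hker : LinearMap.ker (gN.mkQ.comp L.subtype)
        = Submodule.comap L.subtype (L ⊓ gN) := by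
      rw [LinearMap.ker_comp, Submodule.ker_mkQ, Submodule.comap_inf]
      simp [Submodule.comap_subtype_self]
    exact ((Submodule.quotEquivOfEq _ _ hker.symm) ≪≫ₗ
      (gN.mkQ.comp L.subtype).quotKerEquivRange ≪≫ₗ
      LinearEquiv.ofEq _ _ (hrange.trans hLmap.symm)).symm
  calc Nat.card (N ⧸ gN)
      = Nat.card ((L ⊔ gN).map gN.mkQ) * Nat.card (N ⧸ (L ⊔ gN)) := key.symm
    _ = Nat.card ((N ⧸ L) ⧸ LinearMap.range (LinearMap.lsmul R (N ⧸ L) g)) *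
        Nat.card (↥L ⧸ Submodule.comap L.subtype (L ⊓ gN)) := by
        rw [Nat.card_congr e1.toEquiv, Nat.card_congr e2.toEquiv, mul_comm]
end

section
/- Let R be a commutative ring, N an R-module, L ⊆ N a submodule and g ∈ R. If the quotient N/L is finite and the map x ↦ g·x is injective on N, then Nat.card(N/gN) = Nat.card(L/gL). -/
/-- Lemma (Miles): for `R`-modules `L ⊆ N` and `g ∈ R`, if `N/L` is finite and
multiplication by `g` is injective on `N`, then `|N/gN| = |L/gL|`. -/
theorem card_quotient_smul_eq_of_finite_quotient
    {R : Type*} [CommRing R] {N : Type*} [AddCommGroup N] [Module R N]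
    (L : Submodule R N) (g : R)
    (hfin : Finite (N ⧸ L))
    (hinj : Function.Injective (fun x : N => g • x)) :
    Nat.card (N ⧸ LinearMap.range (LinearMap.lsmul R N g)) =
      Nat.card (↥L ⧸ LinearMap.range (LinearMap.lsmul R ↥L g)) := by
  set P := LinearMap.range (LinearMap.lsmul R N g) with hP
  set Q := L.map (LinearMap.lsmul R N g) with hQ
  have hinj' : Function.Injective (LinearMap.lsmul R N g) := hinj
  have hQP : Q ≤ P := by
    rintro x ⟨y, -, rfl⟩; exact ⟨y, rfl⟩
  have hQL : Q ≤ L := by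
    rintro x ⟨y, hy, rfl⟩; exact L.smul_mem g hy
  -- right side equals relindex
  have hR : Nat.card (↥L ⧸ LinearMap.range (LinearMap.lsmul R ↥L g))
      = Q.toAddSubgroup.relIndex L.toAddSubgroup := by
    have : (LinearMap.range (LinearMap.lsmul R ↥L g)).toAddSubgroup
        = Q.toAddSubgroup.addSubgroupOf L.toAddSubgroup := by
      ext x
      constructor
      · rintro ⟨y, rfl⟩
        exact ⟨y, y.2, rfl⟩
      · rintro ⟨y, hy, hxy⟩
        exact ⟨⟨y, hy⟩, Subtype.ext hxy⟩
    show (LinearMap.range (LinearMap.lsmul R ↥L g)).toAddSubgroup.index = _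
    rw [this]; rfl
  -- left side is index of P
  have hL : Nat.card (N ⧸ P) = P.toAddSubgroup.index := rfl
  -- the middle iso : N/L ≃ P/Q'
  have e : (N ⧸ L) ≃ₗ[R] ↥P ⧸ (Q.comap P.subtype) := by
    refine Submodule.Quotient.equiv L (Q.comap P.subtype)
      (LinearEquiv.ofInjective (LinearMap.lsmul R N g) hinj') ?_
    ext x
    simp only [Submodule.mem_map, Submodule.mem_comap]
    constructor
    · rintro ⟨y, hy, rfl⟩
      exact ⟨y, hy, rfl⟩
    · rintro hx
      obtain ⟨y, hy, hxy⟩ := hx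
      exact ⟨y, hy, Subtype.ext hxy⟩
  have hC : Q.toAddSubgroup.relIndex P.toAddSubgroup = Nat.card (N ⧸ L) := by
    have h1 : Q.toAddSubgroup.relIndex P.toAddSubgroup
        = Nat.card (↥P ⧸ (Q.comap P.subtype : Submodule R ↥P)) := by
      show (Q.toAddSubgroup.addSubgroupOf P.toAddSubgroup).index = _
      have heq : Q.toAddSubgroup.addSubgroupOf P.toAddSubgroup
          = (Q.comap P.subtype).toAddSubgroup := by
        ext x; rfl
      rw [heq]; rfl
    rw [h1]
    exact (Nat.card_congr e.toEquiv).symm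
  have hA := AddSubgroup.relIndex_mul_index (H := Q.toAddSubgroup) (K := P.toAddSubgroup) hQP
  have hB := AddSubgroup.relIndex_mul_index (H := Q.toAddSubgroup) (K := L.toAddSubgroup) hQL
  have hLidx : L.toAddSubgroup.index = Nat.card (N ⧸ L) := rfl
  have hc0 : Nat.card (N ⧸ L) ≠ 0 := Nat.card_ne_zero.mpr ⟨inferInstance, hfin⟩
  rw [hL, hR]
  have key : Nat.card (N ⧸ L) * P.toAddSubgroup.index
      = Q.toAddSubgroup.relIndex L.toAddSubgroup * Nat.card (N ⧸ L) := by
    conv_lhs => rw [← hC]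
    conv_rhs => rw [← hLidx]
    rw [hA, hB]
  have := key.trans (mul_comm _ _)
  exact Nat.eq_of_mul_eq_mul_left (Nat.pos_of_ne_zero hc0) this
end

section
/- Let p be a prime and let M be the localization of the polynomial ring 𝔽_p[t] at the multiplicative submonoid generated by t and t−1 (so M = 𝔽_p[t^{±1}, (t−1)^{±1}]). For every j ≥ 1, the quotient module M/(tʲ−1)M is finite with cardinality p^{j − p^{v_p(j)}}, where v_p(j) is the p-adic valuation of j (so p^{v_p(j)} is the largest power of p dividing j). -/
/-!
Write `j = p^k m` with `p ∤ m` and `g = 1 + t + ⋯ + t^(m-1)`. In characteristic `p`,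
`t^j - 1 = (t^m - 1)^(p^k) = (t - 1)^(p^k) g^(p^k)`, and `t - 1` is a unit of `M`, so
`M/(t^j - 1) = M/(g^(p^k))`. Since `g(0) = 1` and `g(1) = m ≠ 0` in `𝔽_p`, both `t` and `t - 1`
are already units modulo `g^(p^k)`, so localizing does not change the quotient:
`M/(g^(p^k)) ≅ 𝔽_p[t]/(g^(p^k))`, an `𝔽_p`-vector space of dimension `deg g^(p^k) = j - p^k`.
-/

open Polynomial

theorem Nat.exists_eq_pow_padicValNat_mul_not_dvd {p j : ℕ} (hp : p.Prime) (hj : j ≠ 0) :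
    ∃ m, p ^ padicValNat p j * m = j ∧ ¬ p ∣ m := by
  rw [← Nat.factorization_def j hp]
  exact ⟨_, Nat.ordProj_mul_ordCompl_eq_self j p, Nat.not_dvd_ordCompl hp hj⟩

theorem Ideal.Quotient.isUnit_mk_of_isCoprime {R : Type*} [CommRing R] {x y : R}
    (h : IsCoprime x y) : IsUnit (Ideal.Quotient.mk (Ideal.span {y}) x) := by
  obtain ⟨a, b, hab⟩ := h
  refine IsUnit.of_mul_eq_one (Ideal.Quotient.mk _ a) ?_
  rw [← map_mul, ← map_one (Ideal.Quotient.mk _), Ideal.Quotient.eq, Ideal.mem_span_singleton]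
  exact ⟨-b, by linear_combination hab⟩

namespace IsLocalization

variable {R : Type*} (S : Type*) [CommRing R] [CommRing S] [Algebra R S] {M : Submonoid R}
  [IsLocalization M S]

theorem span_singleton_algebraMap_mul_of_mem {s : R} (hs : s ∈ M) (x : R) :
    Ideal.span {algebraMap R S (s * x)} = Ideal.span {algebraMap R S x} := by
  rw [map_mul]
  exact Ideal.span_singleton_mul_left_unit (map_units S ⟨s, hs⟩) _

variable (M) in
noncomputable def quotientEquivOfIsUnit (I : Ideal R)
    (hM : ∀ s ∈ M, IsUnit (Ideal.Quotient.mk I s)) :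
    (R ⧸ I) ≃ₐ[R ⧸ I] S ⧸ I.map (algebraMap R S) :=
  atUnits _ (Algebra.algebraMapSubmonoid (R ⧸ I) M) (by rintro _ ⟨s, hs, rfl⟩; exact hM s hs)

end IsLocalization

namespace Polynomial

section CommRing

variable {R : Type*} [CommRing R]

theorem natDegree_geom_sum_X [Nontrivial R] (m : ℕ) :
    (∑ i ∈ Finset.range m, (X : R[X]) ^ i).natDegree = m - 1 := by
  rcases eq_or_ne m 0 with rfl | hm
  · simp
  have := (monic_X_sub_C (1 : R)).natDegree_mul (monic_geom_sum_X hm)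
  rw [C_1, mul_geom_sum, ← C_1, natDegree_X_pow_sub_C, natDegree_X_sub_C] at this
  omega

theorem X_pow_sub_one_eq_mul_pow_geom_sum (p : ℕ) [ExpChar R p] (k m : ℕ) :
    (X ^ (p ^ k * m) - 1 : R[X]) = (X - 1) ^ p ^ k * (∑ i ∈ Finset.range m, X ^ i) ^ p ^ k := by
  rw [← mul_pow, mul_geom_sum, sub_pow_expChar_pow, one_pow, ← pow_mul, mul_comm]

end CommRing

section Field

variable {K : Type*} [Field K]

theorem finite_quotient_span_singleton [Finite K] {f : K[X]} (hf : f ≠ 0) :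
    Finite (K[X] ⧸ Ideal.span {f}) :=
  have : Module.Finite K (K[X] ⧸ Ideal.span {f}) := (AdjoinRoot.powerBasis hf).finite
  Module.finite_of_finite K

theorem natCard_quotient_span_singleton [Finite K] {f : K[X]} (hf : f ≠ 0) :
    Nat.card (K[X] ⧸ Ideal.span {f}) = Nat.card K ^ f.natDegree := by
  have : Module.Finite K (K[X] ⧸ Ideal.span {f}) := (AdjoinRoot.powerBasis hf).finite
  rw [Module.natCard_eq_pow_finrank (K := K), finrank_quotient_span_eq_natDegree]

theorem isUnit_mk_X_sub_C_of_eval_ne_zero {f : K[X]} {a : K} (ha : f.eval a ≠ 0) :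
    IsUnit (Ideal.Quotient.mk (Ideal.span {f}) (X - C a)) :=
  Ideal.Quotient.isUnit_mk_of_isCoprime <|
    (irreducible_X_sub_C a).coprime_iff_not_dvd.2 (by rwa [dvd_iff_isRoot])

theorem isUnit_mk_of_mem_closure_X_X_sub_one {f : K[X]} (h₀ : f.eval 0 ≠ 0) (h₁ : f.eval 1 ≠ 0)
    {s : K[X]} (hs : s ∈ Submonoid.closure {X, X - 1}) :
    IsUnit (Ideal.Quotient.mk (Ideal.span {f}) s) := by
  refine (Submonoid.closure_le
    (S := (IsUnit.submonoid _).comap (Ideal.Quotient.mk (Ideal.span {f})))).2 ?_ hs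
  rintro _ (rfl | rfl)
  · simpa [IsUnit.mem_submonoid_iff] using isUnit_mk_X_sub_C_of_eval_ne_zero h₀
  · simpa [IsUnit.mem_submonoid_iff] using isUnit_mk_X_sub_C_of_eval_ne_zero h₁

end Field

end Polynomial

/-- For `M = 𝔽_p[t^{±1}, (t-1)^{±1}]`, i.e. the localization of `𝔽_p[t]` at the
multiplicative submonoid generated by `t` and `t - 1`, the quotient
`M/(tʲ-1)M` is finite of cardinality `p^(j - p^(v_p(j)))` for every `j ≥ 1`. -/
theorem card_quotient_localization_pow_sub_one (p : ℕ) (hp : p.Prime) (j : ℕ) (hj : 1 ≤ j) :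
    Finite
      (Localization (Submonoid.closure {(X : Polynomial (ZMod p)), X - 1}) ⧸
        Ideal.span {algebraMap (Polynomial (ZMod p))
          (Localization (Submonoid.closure {(X : Polynomial (ZMod p)), X - 1}))
          (X ^ j - 1)}) ∧
    Nat.card
      (Localization (Submonoid.closure {(X : Polynomial (ZMod p)), X - 1}) ⧸
        Ideal.span {algebraMap (Polynomial (ZMod p))
          (Localization (Submonoid.closure {(X : Polynomial (ZMod p)), X - 1}))
          (X ^ j - 1)}) =
      p ^ (j - p ^ padicValNat p j) := by
  have := Fact.mk hp
  set S := Submonoid.closure {(X : (ZMod p)[X]), X - 1}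
  obtain ⟨m, hjm, hpm⟩ := Nat.exists_eq_pow_padicValNat_mul_not_dvd hp (by omega : j ≠ 0)
  set k := padicValNat p j
  have hm : m ≠ 0 := by rintro rfl; exact hpm (dvd_zero p)
  set h : (ZMod p)[X] := (∑ i ∈ Finset.range m, X ^ i) ^ p ^ k
  have hh : h ≠ 0 := ((monic_geom_sum_X hm).pow _).ne_zero
  have hdeg : h.natDegree = p ^ k * m - p ^ k := by
    rw [natDegree_pow, natDegree_geom_sum_X, Nat.mul_sub_one]
  have hunits (s : (ZMod p)[X]) (hs : s ∈ S) :
      IsUnit (Ideal.Quotient.mk (Ideal.span {h}) s) :=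
    isUnit_mk_of_mem_closure_X_X_sub_one (by simp [h, eval_geom_sum, hm])
      (by simpa [h, eval_geom_sum, ZMod.natCast_eq_zero_iff] using hpm) hs
  let e := IsLocalization.quotientEquivOfIsUnit (Localization S) S _ hunits
  have := finite_quotient_span_singleton hh
  rw [← hjm, X_pow_sub_one_eq_mul_pow_geom_sum p k m,
    IsLocalization.span_singleton_algebraMap_mul_of_mem (M := S) _
      (pow_mem (Submonoid.subset_closure (by simp)) _), ← Set.image_singleton, ← Ideal.map_span]
  exact ⟨Finite.of_equiv _ e.toEquiv, by
    rw [← Nat.card_congr e.toEquiv, natCard_quotient_span_singleton hh, hdeg, Nat.card_zmod]⟩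
end

section
/- Every additive group endomorphism φ of the group ℤ_p of p-adic integers is multiplication by φ(1); that is, for every additive monoid homomorphism φ : ℤ_p →+ ℤ_p and every x ∈ ℤ_p, φ(x) = φ(1)·x. In particular End(ℤ_p) ≅ ℤ_p. -/
private lemma padicInt_key (p : ℕ) [Fact p.Prime] (φ : ℤ_[p] →+ ℤ_[p]) (x : ℤ_[p]) :
    φ x = φ 1 * x := by
  have hdvd : ∀ n : ℕ, (p : ℤ_[p]) ^ n ∣ φ x - φ 1 * x := by
    intro n
    obtain ⟨w, hw⟩ := Ideal.mem_span_singleton.mp (PadicInt.appr_spec n x)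
    have hx : x = (p : ℤ_[p]) ^ n * w + (x.appr n : ℤ_[p]) := by rw [← hw]; ring
    have hφ : φ ((p : ℤ_[p]) ^ n * w) = (p : ℤ_[p]) ^ n * φ w := by
      have h1 : (p : ℤ_[p]) ^ n * w = (p ^ n : ℕ) • w := by simp [nsmul_eq_mul]
      rw [h1, map_nsmul, nsmul_eq_mul]; push_cast; ring
    have hnat : φ ((x.appr n : ℤ_[p])) = (x.appr n : ℤ_[p]) * φ 1 := by
      have h := map_nsmul φ (x.appr n) (1 : ℤ_[p])
      simp only [nsmul_eq_mul, mul_one] at h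
      rw [h]
    refine ⟨φ w - φ 1 * w, ?_⟩
    rw [hx, map_add, hφ, hnat]; ring
  have hnorm : ∀ n : ℕ, ‖φ x - φ 1 * x‖ ≤ (p : ℝ) ^ (-(n : ℤ)) := fun n =>
    (PadicInt.norm_le_pow_iff_mem_span_pow _ n).mpr
      (Ideal.mem_span_singleton.mpr (hdvd n))
  have hp1 : (1 : ℝ) < p := by exact_mod_cast (Fact.out : p.Prime).one_lt
  have htend : Filter.Tendsto (fun n : ℕ => (p : ℝ) ^ (-(n : ℤ))) Filter.atTop (nhds 0) := by
    have h0 : (0:ℝ) ≤ (p:ℝ)⁻¹ := by positivity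
    have h1 : (p:ℝ)⁻¹ < 1 := inv_lt_one_of_one_lt₀ hp1
    have := tendsto_pow_atTop_nhds_zero_of_lt_one h0 h1
    refine this.congr fun n => ?_
    rw [zpow_neg, zpow_natCast, inv_pow]
  have hle : ‖φ x - φ 1 * x‖ ≤ 0 :=
    ge_of_tendsto htend (Filter.Eventually.of_forall hnorm)
  exact sub_eq_zero.mp (norm_le_zero_iff.mp hle)

/-- Every additive endomorphism of `ℤ_p` is multiplication by its value at `1`;
in particular the endomorphism ring of the additive group `ℤ_p` is isomorphic
to `ℤ_p`. -/
theorem padicInt_addMonoidHom_eq_mul (p : ℕ) [Fact p.Prime] :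
    (∀ (φ : ℤ_[p] →+ ℤ_[p]) (x : ℤ_[p]), φ x = φ 1 * x) ∧
    Nonempty (AddMonoid.End ℤ_[p] ≃+* ℤ_[p]) := by
  refine ⟨padicInt_key p, ⟨?_⟩⟩
  exact
    { toFun := fun φ => φ 1
      invFun := fun c => AddMonoidHom.mulLeft c
      left_inv := fun φ => AddMonoidHom.ext fun x => (padicInt_key p φ x).symm
      right_inv := fun c => mul_one c
      map_add' := fun φ ψ => rfl
      map_mul' := fun φ ψ => padicInt_key p φ (ψ 1) }
end

section
/- Let p be a prime, a ∈ ℤ_p with a ≠ 1, and let φ : ℤ_p → ℤ_p be the endomorphism φ(x) = a·x. Then the Reidemeister number of φ is finite and equals ‖1 − a‖_p^{-1} = p^{v(1−a)}, where v(1−a) is the p-adic valuation of 1 − a; that is, the number of φ-conjugacy classes equals the index of (1−a)ℤ_p in ℤ_p, which is p^{v(1−a)}. -/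
/-! Since `x + b - a b = x + (1 - a) b`, the `(a ·)`-conjugacy classes are exactly the cosets of
the ideal `(1 - a)`. In `ℤ_[p]` a nonzero `c` is associated to `p ^ v(c)`, so
`ℤ_[p] ⧸ (c) ≅ ℤ_[p] ⧸ (p ^ v(c)) ≅ ZMod (p ^ v(c))`, which has `p ^ v(c) = ‖c‖⁻¹` elements. -/

def quotTwistedConjEquivQuotientSpan {R : Type*} [CommRing R] (a : R) :
    Quot (fun x y : R => ∃ b : R, y = x + b - a * b) ≃ R ⧸ Ideal.span {1 - a} :=
  Quot.congrRight fun x y => by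
    rw [Submodule.quotientRel_def, Ideal.mem_span_singleton']
    constructor
    · rintro ⟨b, rfl⟩
      exact ⟨-b, by ring⟩
    · rintro ⟨b, hb⟩
      exact ⟨-b, by linear_combination hb⟩

namespace PadicInt

variable {p : ℕ} [Fact p.Prime]

theorem span_singleton_eq_span_p_pow {x : ℤ_[p]} (hx : x ≠ 0) :
    Ideal.span {x} = Ideal.span {(p : ℤ_[p]) ^ x.valuation} := by
  conv_lhs => rw [unitCoeff_spec hx]
  exact Ideal.span_singleton_mul_left_unit (unitCoeff hx).isUnit _

variable (p) in
noncomputable def quotientSpanPPowEquivZMod (n : ℕ) : ℤ_[p] ⧸ Ideal.span {(p : ℤ_[p]) ^ n} ≃+* ZMod (p ^ n) :=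
  (Ideal.quotEquivOfEq (ker_toZModPow n).symm).trans
    (RingHom.quotientKerEquivOfSurjective (ZMod.ringHom_surjective _))

theorem card_quotient_span_singleton {x : ℤ_[p]} (hx : x ≠ 0) :
    Nat.card (ℤ_[p] ⧸ Ideal.span {x}) = p ^ x.valuation := by
  rw [span_singleton_eq_span_p_pow hx, Nat.card_congr (quotientSpanPPowEquivZMod p _).toEquiv,
    Nat.card_zmod]

theorem norm_inv_eq_pow_valuation {x : ℤ_[p]} (hx : x ≠ 0) : ‖x‖⁻¹ = (p : ℝ) ^ x.valuation := by
  rw [norm_eq_zpow_neg_valuation hx, ← zpow_neg, neg_neg, zpow_natCast]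

end PadicInt

/-- For the endomorphism `x ↦ a·x` of `ℤ_p` with `a ≠ 1`, the Reidemeister number
is finite and equals `‖1 - a‖⁻¹ = p^(v(1-a))`, which is the index of `(1-a)ℤ_p`
in `ℤ_p`. -/
theorem reidemeister_number_padicInt (p : ℕ) [Fact p.Prime] (a : ℤ_[p]) (ha : a ≠ 1) :
    Finite (Quot (fun x y : ℤ_[p] => ∃ b : ℤ_[p], y = x + b - a * b)) ∧
    (Nat.card (Quot (fun x y : ℤ_[p] => ∃ b : ℤ_[p], y = x + b - a * b)) : ℝ) =
      ‖(1 : ℤ_[p]) - a‖⁻¹ ∧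
    Nat.card (Quot (fun x y : ℤ_[p] => ∃ b : ℤ_[p], y = x + b - a * b)) =
      p ^ ((1 - a).valuation) ∧
    Nat.card (Quot (fun x y : ℤ_[p] => ∃ b : ℤ_[p], y = x + b - a * b)) =
      Nat.card (ℤ_[p] ⧸ Ideal.span {(1 : ℤ_[p]) - a}) := by
  have hc : (1 : ℤ_[p]) - a ≠ 0 := sub_ne_zero.mpr ha.symm
  have hclasses := Nat.card_congr (quotTwistedConjEquivQuotientSpan a)
  have hcard := hclasses.trans (PadicInt.card_quotient_span_singleton hc)
  refine ⟨Nat.finite_of_card_ne_zero ?_, ?_, hcard, hclasses⟩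
  · rw [hcard]
    exact pow_ne_zero _ (Fact.out : p.Prime).ne_zero
  · rw [hcard, PadicInt.norm_inv_eq_pow_valuation hc, Nat.cast_pow]
end

section
/- Let p be a prime, d ≥ 1, and Φ a d×d matrix over ℤ_p defining the endomorphism φ(x) = Φ·x of the group ℤ_p^d. If det(Φ − Id) ≠ 0, then the Reidemeister number of φ is finite and R(φ) = |Coker(Id − φ)| = ‖det(Φ − Id)‖_p^{-1}, where Coker(Id − φ) = ℤ_p^d / Im(Id − φ). -/
/-!
Since `ℤ_p^d` is abelian, `φ`-conjugacy is congruence modulo the image of `Id - φ`, so the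
Reidemeister classes are the cokernel of `Id - φ`. Over the PID `ℤ_p`, a Smith normal form
turns the cokernel of an injective endomorphism into `∏ ℤ_p ⧸ (aᵢ)` with `∏ aᵢ` associated to
its determinant, and `|ℤ_p ⧸ (a)| = p ^ v(a) = ‖a‖⁻¹`.
-/

open Module Submodule

section SmithNormalForm

variable {ι R M : Type*} [Fintype ι] [CommRing R] [IsDomain R] [IsPrincipalIdealRing R]
  [AddCommGroup M] [Module R M]

theorem LinearMap.associated_det_prod_smithNormalFormCoeffs (b : Basis ι R M) {f : M →ₗ[R] M}
    (hf : Function.Injective f) (h : finrank R (LinearMap.range f) = finrank R M) :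
    Associated (LinearMap.det f) (∏ i, smithNormalFormCoeffs b h i) := by
  classical
  let b' := smithNormalFormTopBasis b h
  let e : M ≃ₗ[R] LinearMap.range f := b'.equiv (smithNormalFormBotBasis b h) (Equiv.refl _)
  have hdiag : LinearMap.toMatrix b' b' ((LinearMap.range f).subtype ∘ₗ e) =
      Matrix.diagonal (smithNormalFormCoeffs b h) := by
    ext i j
    rw [LinearMap.toMatrix_apply, LinearMap.comp_apply, LinearEquiv.coe_coe, Basis.equiv_apply,
      Equiv.refl_apply, subtype_apply, smithNormalFormBotBasis_def, map_smul, Basis.repr_self,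
      Finsupp.smul_single, smul_eq_mul, mul_one, Matrix.diagonal_apply,
      Finsupp.single_eq_pi_single, Pi.single_apply]
    split_ifs with hij
    · rw [hij]
    · rfl
  have hf_eq : LinearMap.det f =
      LinearMap.det ((LinearMap.range f).subtype ∘ₗ (LinearEquiv.ofInjective f hf).toLinearMap) :=
    congrArg LinearMap.det (LinearMap.ext fun _ ↦ rfl)
  rw [hf_eq]
  refine (LinearMap.associated_det_comp_equiv _ (LinearEquiv.ofInjective f hf) e).trans ?_
  rw [← LinearMap.det_toMatrix b', hdiag, Matrix.det_diagonal]

end SmithNormalForm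

namespace PadicInt

variable {p : ℕ} [Fact p.Prime]

theorem natCard_quotient_span_p_pow (n : ℕ) :
    Nat.card (ℤ_[p] ⧸ Ideal.span {(p : ℤ_[p]) ^ n}) = p ^ n := by
  rw [← ker_toZModPow, Nat.card_congr
    (RingHom.quotientKerEquivOfSurjective (ZMod.ringHom_surjective (toZModPow n))).toEquiv,
    Nat.card_zmod]

theorem natCard_quotient_span_singleton {a : ℤ_[p]} (ha : a ≠ 0) :
    (Nat.card (ℤ_[p] ⧸ Ideal.span {a}) : ℝ) = ‖a‖⁻¹ := by
  have hspan : Ideal.span {a} = Ideal.span {(p : ℤ_[p]) ^ a.valuation} :=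
    Ideal.span_singleton_eq_span_singleton.mpr
      ⟨unitCoeff ha, by rw [mul_comm]; exact (unitCoeff_spec ha).symm⟩ |>.symm
  rw [hspan, natCard_quotient_span_p_pow, norm_eq_zpow_neg_valuation ha]
  simp

theorem natCard_quotient_range_mulVecLin {ι : Type*} [Fintype ι] [DecidableEq ι]
    {A : Matrix ι ι ℤ_[p]} (hA : A.det ≠ 0) :
    (Nat.card ((ι → ℤ_[p]) ⧸ LinearMap.range A.mulVecLin) : ℝ) = ‖A.det‖⁻¹ := by
  have hinj : Function.Injective A.mulVecLin := Matrix.mulVec_injective_of_det_ne_zero hA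
  have hrank := LinearMap.finrank_range_of_inj hinj
  let b := Pi.basisFun ℤ_[p] ι
  obtain ⟨u, hu⟩ := LinearMap.associated_det_prod_smithNormalFormCoeffs b hinj hrank
  have hdet : LinearMap.det A.mulVecLin = A.det := by
    rw [← Matrix.toLin'_apply', LinearMap.det_toLin']
  rw [hdet] at hu
  have hnorm : ‖A.det‖ = ∏ i, ‖smithNormalFormCoeffs b hrank i‖ := by
    rw [← norm_prod, ← hu, norm_mul, norm_units, mul_one]
  rw [Nat.card_congr (quotientEquivPiSpan _ b hrank).toEquiv, Nat.card_pi, Nat.cast_prod, hnorm,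
    ← Finset.prod_inv_distrib]
  exact Finset.prod_congr rfl fun i _ ↦
    natCard_quotient_span_singleton (smithNormalFormCoeffs_ne_zero b hrank i)

end PadicInt

namespace Module.End

variable {R M : Type*} [Ring R] [AddCommGroup M] [Module R M]

def quotTwistedConjEquivQuotientRange (f : Module.End R M) :
    Quot (fun x y : M ↦ ∃ b, y = x + b - f b) ≃ M ⧸ LinearMap.range (1 - f) :=
  Quot.congrRight fun x y ↦ by
    rw [Submodule.quotientRel_def, ← Submodule.neg_mem_iff, neg_sub]
    refine exists_congr fun b ↦ ?_
    rw [LinearMap.sub_apply, one_apply]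
    constructor
    · rintro rfl
      abel
    · intro h
      rw [add_sub_assoc, h, add_sub_cancel]

end Module.End

theorem reidemeister_number_padicInt_matrix_general (p : ℕ) [Fact p.Prime] (d : ℕ)
    (Φ : Matrix (Fin d) (Fin d) ℤ_[p]) (h : (Φ - 1).det ≠ 0) :
    Finite (Quot (fun x y : Fin d → ℤ_[p] => ∃ b, y = x + b - Φ.mulVec b)) ∧
    Nat.card (Quot (fun x y : Fin d → ℤ_[p] => ∃ b, y = x + b - Φ.mulVec b)) =
      Nat.card ((Fin d → ℤ_[p]) ⧸ LinearMap.range (Matrix.mulVecLin (1 - Φ))) ∧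
    (Nat.card (Quot (fun x y : Fin d → ℤ_[p] => ∃ b, y = x + b - Φ.mulVec b)) : ℝ) =
      ‖(Φ - 1).det‖⁻¹ := by
  have hcoker : Nat.card (Quot (fun x y : Fin d → ℤ_[p] => ∃ b, y = x + b - Φ.mulVec b)) =
      Nat.card ((Fin d → ℤ_[p]) ⧸ LinearMap.range (Matrix.mulVecLin (1 - Φ))) := by
    have hsub : Matrix.mulVecLin (1 - Φ) = 1 - Φ.mulVecLin := by
      rw [← Matrix.toLin'_apply', map_sub, Matrix.toLin'_one, Matrix.toLin'_apply']
      rfl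
    rw [hsub]
    exact Nat.card_congr (Module.End.quotTwistedConjEquivQuotientRange Φ.mulVecLin)
  have hneg : (1 - Φ).det = (-1) ^ d * (Φ - 1).det := by
    rw [← neg_sub, Matrix.det_neg, Fintype.card_fin]
  have hdet : (1 - Φ).det ≠ 0 :=
    hneg ▸ mul_ne_zero (pow_ne_zero _ (neg_ne_zero.mpr one_ne_zero)) h
  have hcard : (Nat.card (Quot (fun x y : Fin d → ℤ_[p] => ∃ b, y = x + b - Φ.mulVec b)) : ℝ) =
      ‖(Φ - 1).det‖⁻¹ := by
    rw [hcoker, PadicInt.natCard_quotient_range_mulVecLin hdet, hneg, norm_mul, norm_pow,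
      norm_neg, norm_one, one_pow, one_mul]
  -- `Nat.card` of an infinite type is `0`, whereas `‖(Φ - 1).det‖⁻¹ ≠ 0`.
  refine ⟨Nat.finite_of_card_ne_zero ?_, hcoker, hcard⟩
  exact Nat.cast_ne_zero.mp (hcard ▸ inv_ne_zero (norm_ne_zero_iff.mpr h))

/-- For the endomorphism `φ(x) = Φ·x` of `ℤ_p^d` with `det(Φ - Id) ≠ 0`, the
Reidemeister number is finite and equals the cardinality of the cokernel of
`Id - φ`, which is `‖det(Φ - Id)‖⁻¹`. -/
theorem reidemeister_number_padicInt_matrix (p : ℕ) [Fact p.Prime] (d : ℕ) (hd : 1 ≤ d)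
    (Φ : Matrix (Fin d) (Fin d) ℤ_[p]) (h : (Φ - 1).det ≠ 0) :
    Finite (Quot (fun x y : Fin d → ℤ_[p] => ∃ b, y = x + b - Φ.mulVec b)) ∧
    Nat.card (Quot (fun x y : Fin d → ℤ_[p] => ∃ b, y = x + b - Φ.mulVec b)) =
      Nat.card ((Fin d → ℤ_[p]) ⧸ LinearMap.range (Matrix.mulVecLin (1 - Φ))) ∧
    (Nat.card (Quot (fun x y : Fin d → ℤ_[p] => ∃ b, y = x + b - Φ.mulVec b)) : ℝ) =
      ‖(Φ - 1).det‖⁻¹ :=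
  reidemeister_number_padicInt_matrix_general p d Φ h
end

section
/- Let p be a prime and x ∈ ℤ_p with ‖x‖_p = 1 and x of infinite multiplicative order (xⁿ ≠ 1 for all n ≥ 1). Let γ be the multiplicative order of the image of x in the residue field 𝔽_p = ℤ_p/pℤ_p. Then: (a) if γ ≠ 1 and gcd(γ, n) = 1, then ‖xⁿ − 1‖_p = 1; (b) there exist a constant C with 0 < C < 1 and r₀ ≥ 0 such that whenever n = k·γ·p^r with gcd(p, k) = 1 and r > r₀, one has ‖xⁿ − 1‖_p = C·p^{−r}. -/
private lemma padic_aux_toZMod {p : ℕ} [Fact p.Prime] (z : ℤ_[p]) :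
    ‖z‖ < 1 ↔ PadicInt.toZMod z = 0 := by
  rw [← RingHom.mem_ker, PadicInt.ker_toZMod, PadicInt.maximalIdeal_eq_span_p,
    Ideal.mem_span_singleton, ← PadicInt.norm_lt_one_iff_dvd]

private lemma padic_aux_le_inv {p : ℕ} [Fact p.Prime] {z : ℤ_[p]} (h : ‖z‖ < 1) :
    ‖z‖ ≤ (p : ℝ)⁻¹ := by
  obtain ⟨w, rfl⟩ := (PadicInt.norm_lt_one_iff_dvd z).mp h
  rw [norm_mul, PadicInt.norm_p]
  have hp0 : (0:ℝ) ≤ (p:ℝ)⁻¹ := by positivity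
  exact mul_le_of_le_one_right hp0 (PadicInt.norm_le_one w)

private lemma padic_aux_geom {p : ℕ} [Fact p.Prime] (z : ℤ_[p]) (m : ℕ) :
    ‖(∑ i ∈ Finset.range m, z ^ i) - (m : ℤ_[p])‖ ≤ ‖z - 1‖ := by
  have h1 : (∑ i ∈ Finset.range m, z ^ i) - (m : ℤ_[p])
      = ∑ i ∈ Finset.range m, (z ^ i - 1) := by
    rw [Finset.sum_sub_distrib]
    simp
  rw [h1]
  refine IsUltrametricDist.norm_sum_le_of_forall_le_of_nonneg (norm_nonneg _) ?_
  intro i _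
  have h2 : z ^ i - 1 = (∑ j ∈ Finset.range i, z ^ j) * (z - 1) := (geom_sum_mul z i).symm
  rw [h2, norm_mul]
  calc ‖∑ j ∈ Finset.range i, z ^ j‖ * ‖z - 1‖ ≤ 1 * ‖z - 1‖ := by
        gcongr; exact PadicInt.norm_le_one _
    _ = ‖z - 1‖ := one_mul _

private lemma padic_aux_norm_geom {p : ℕ} [Fact p.Prime] {z : ℤ_[p]} {m : ℕ}
    (h : ‖z - 1‖ < ‖(m : ℤ_[p])‖) :
    ‖∑ i ∈ Finset.range m, z ^ i‖ = ‖(m : ℤ_[p])‖ := by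
  have h2 : ‖(∑ i ∈ Finset.range m, z ^ i) - (m : ℤ_[p])‖ < ‖(m : ℤ_[p])‖ :=
    lt_of_le_of_lt (padic_aux_geom z m) h
  calc ‖∑ i ∈ Finset.range m, z ^ i‖
      = ‖((∑ i ∈ Finset.range m, z ^ i) - (m : ℤ_[p])) + (m : ℤ_[p])‖ := by
        rw [sub_add_cancel]
    _ = ‖(m : ℤ_[p])‖ := by
        rw [IsUltrametricDist.norm_add_eq_max_of_norm_ne_norm (ne_of_lt h2)]
        exact max_eq_right h2.le

private lemma padic_aux_pstep {p : ℕ} [Fact p.Prime] {z : ℤ_[p]}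
    (hz : ‖z - 1‖ < (p : ℝ)⁻¹) : ‖z ^ p - 1‖ = (p : ℝ)⁻¹ * ‖z - 1‖ := by
  rw [← geom_sum_mul, norm_mul, padic_aux_norm_geom (by rwa [PadicInt.norm_p]),
    PadicInt.norm_p]

private lemma padic_aux_pstep_le {p : ℕ} [Fact p.Prime] {z : ℤ_[p]}
    (hz : ‖z - 1‖ ≤ (p : ℝ)⁻¹) : ‖z ^ p - 1‖ ≤ (p : ℝ)⁻¹ * ‖z - 1‖ := by
  rw [← geom_sum_mul, norm_mul]
  gcongr
  have hS : ‖∑ i ∈ Finset.range p, z ^ i‖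
      = ‖((∑ i ∈ Finset.range p, z ^ i) - (p : ℤ_[p])) + (p : ℤ_[p])‖ := by
    rw [sub_add_cancel]
  rw [hS]
  refine le_trans (IsUltrametricDist.norm_add_le_max _ _) (max_le ?_ ?_)
  · exact le_trans (padic_aux_geom z p) hz
  · rw [PadicInt.norm_p]

private lemma padic_aux_kstep {p : ℕ} [Fact p.Prime] {z : ℤ_[p]} {k : ℕ}
    (hz : ‖z - 1‖ < 1) (hk : ¬ p ∣ k) : ‖z ^ k - 1‖ = ‖z - 1‖ := by
  have hk1 : ‖(k : ℤ_[p])‖ = 1 := by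
    rcases lt_or_eq_of_le (PadicInt.norm_le_one (k : ℤ_[p])) with h | h
    · exfalso
      have := (PadicInt.norm_int_lt_one_iff_dvd (k : ℤ)).mp (by push_cast; exact_mod_cast h)
      exact hk (by exact_mod_cast this)
    · exact h
  rw [← geom_sum_mul, norm_mul, padic_aux_norm_geom (by rwa [hk1]), hk1, one_mul]

/-- Key technical lemma: let `x ∈ ℤ_p` with `‖x‖ = 1` and infinite multiplicative
order, and let `γ` be the multiplicative order of the image of `x` in the residue
field `𝔽_p`. Then (a) if `γ ≠ 1` and `gcd(γ, n) = 1` then `‖xⁿ - 1‖ = 1`;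
(b) there are `0 < C < 1` and `r₀` such that whenever `n = k·γ·p^r` with
`gcd(p, k) = 1` and `r > r₀`, one has `‖xⁿ - 1‖ = C·p^(-r)`. -/
theorem padic_norm_pow_sub_one (p : ℕ) [Fact p.Prime] (x : ℤ_[p])
    (hx : ‖x‖ = 1) (hord : ∀ n : ℕ, 1 ≤ n → x ^ n ≠ 1) :
    (∀ n : ℕ, orderOf (PadicInt.toZMod x) ≠ 1 →
      Nat.gcd (orderOf (PadicInt.toZMod x)) n = 1 → ‖x ^ n - 1‖ = 1) ∧
    (∃ C : ℝ, 0 < C ∧ C < 1 ∧ ∃ r₀ : ℕ,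
      ∀ k r : ℕ, Nat.gcd p k = 1 → r₀ < r →
        ‖x ^ (k * orderOf (PadicInt.toZMod x) * p ^ r) - 1‖ = C * (p : ℝ) ^ (-(r : ℤ))) := by
  have hp : 1 < p := (Fact.out : p.Prime).one_lt
  have hpR : (1:ℝ) < p := by exact_mod_cast hp
  have hp0 : (0:ℝ) < p := by positivity
  have hpinv : (p:ℝ)⁻¹ < 1 := inv_lt_one_of_one_lt₀ hpR
  have hpinv0 : (0:ℝ) < (p:ℝ)⁻¹ := by positivity
  set γ := orderOf (PadicInt.toZMod x) with hγ
  -- part (a)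
  have parta : ∀ n : ℕ, γ ≠ 1 → Nat.gcd γ n = 1 → ‖x ^ n - 1‖ = 1 := by
    intro n hγ1 hgcd
    rcases lt_or_eq_of_le (PadicInt.norm_le_one (x ^ n - 1)) with h | h
    · exfalso
      have h0 : PadicInt.toZMod (x ^ n - 1) = 0 := (padic_aux_toZMod _).mp h
      rw [map_sub, map_pow, map_one, sub_eq_zero] at h0
      have hdvd : γ ∣ n := orderOf_dvd_of_pow_eq_one h0
      exact hγ1 (by rw [← Nat.gcd_eq_left hdvd, hgcd])
    · exact h
  refine ⟨parta, ?_⟩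
  -- positivity of γ
  have hx0 : PadicInt.toZMod x ≠ 0 := by
    intro h0
    have := (padic_aux_toZMod x).mpr h0
    rw [hx] at this; exact lt_irrefl _ this
  have hux : IsUnit (PadicInt.toZMod x) := isUnit_iff_ne_zero.mpr hx0
  have hγpos : 0 < γ := by
    have h1 : 0 < orderOf hux.unit := orderOf_pos _
    rwa [hγ, ← hux.unit_spec, orderOf_units]
  -- setup for part (b)
  set y : ℤ_[p] := x ^ γ with hy
  have hy1 : ‖y - 1‖ ≤ (p:ℝ)⁻¹ := by
    apply padic_aux_le_inv
    rw [padic_aux_toZMod, map_sub, map_pow, map_one, sub_eq_zero, hγ]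
    exact pow_orderOf_eq_one _
  set z₀ : ℤ_[p] := y ^ p with hz₀
  have hz₀le : ‖z₀ - 1‖ ≤ (p:ℝ)⁻¹ * (p:ℝ)⁻¹ :=
    le_trans (padic_aux_pstep_le hy1) (mul_le_mul_of_nonneg_left hy1 hpinv0.le)
  have hz₀ne : z₀ ≠ 1 := by
    rw [hz₀, hy, ← pow_mul]
    exact hord (γ * p) (Nat.one_le_iff_ne_zero.mpr (by positivity))
  have hD0 : 0 < ‖z₀ - 1‖ := by
    rw [norm_pos_iff]
    exact sub_ne_zero_of_ne hz₀ne
  have hDlt : ‖z₀ - 1‖ < (p:ℝ)⁻¹ :=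
    lt_of_le_of_lt hz₀le (by nlinarith)
  -- induction: norm of z₀ ^ (p ^ s) - 1
  have key : ∀ s : ℕ, ‖z₀ ^ (p ^ s) - 1‖ = (p:ℝ) ^ (-(s:ℤ)) * ‖z₀ - 1‖ ∧
      ‖z₀ ^ (p ^ s) - 1‖ < (p:ℝ)⁻¹ := by
    intro s
    induction s with
    | zero => simpa using hDlt
    | succ s ih =>
      obtain ⟨ih1, ih2⟩ := ih
      have hstep := padic_aux_pstep ih2
      have hpow : (z₀ ^ (p ^ s)) ^ p = z₀ ^ (p ^ (s + 1)) := by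
        rw [← pow_mul, pow_succ]
      rw [hpow] at hstep
      constructor
      · rw [hstep, ih1]
        rw [show (-(↑(s+1):ℤ)) = -(s:ℤ) + (-1) by push_cast; ring, zpow_add₀ (ne_of_gt hp0)]
        simp [zpow_neg]
        ring
      · rw [hstep]
        calc (p:ℝ)⁻¹ * ‖z₀ ^ (p ^ s) - 1‖ < (p:ℝ)⁻¹ * 1 := by
              gcongr
              exact lt_of_lt_of_le ih2 hpinv.le
          _ = (p:ℝ)⁻¹ := mul_one _
  refine ⟨‖z₀ - 1‖ * p, by positivity, ?_, 0, ?_⟩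
  · calc ‖z₀ - 1‖ * p ≤ (p:ℝ)⁻¹ * (p:ℝ)⁻¹ * p := by gcongr
      _ = (p:ℝ)⁻¹ := by field_simp
      _ < 1 := hpinv
  · intro k r hk hr
    obtain ⟨s, rfl⟩ : ∃ s, r = s + 1 := ⟨r - 1, by omega⟩
    have hpk : ¬ p ∣ k := by
      intro hdvd
      have := Nat.gcd_eq_left hdvd
      rw [hk] at this
      omega
    have hexp : k * γ * p ^ (s + 1) = (γ * p) * p ^ s * k := by
      rw [pow_succ]; ring
    have hxpow : x ^ (k * γ * p ^ (s + 1)) = (z₀ ^ (p ^ s)) ^ k := by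
      rw [hexp, hz₀, hy, ← pow_mul, ← pow_mul, ← pow_mul]
      ring_nf
    obtain ⟨key1, key2⟩ := key s
    rw [hxpow, padic_aux_kstep (lt_trans key2 hpinv) hpk, key1]
    rw [show (-(↑(s+1):ℤ)) = -(s:ℤ) + (-1) by push_cast; ring, zpow_add₀ (ne_of_gt hp0)]
    simp only [zpow_neg, zpow_natCast, zpow_one]
    have hpne : (p:ℝ) ≠ 0 := ne_of_gt hp0
    field_simp
end

section
/- Let p be a prime, d ≥ 1, and Φ a d×d matrix over ℤ_p such that det(Φⁿ − Id) ≠ 0 for all n ≥ 1. Then there exists a constant c > 0 such that ‖det(Φⁿ − Id)‖_p ≥ c / n^d for all n ≥ 1 (and trivially ‖det(Φⁿ − Id)‖_p ≤ 1). -/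
/-!
The closure of `{Φ, Φ², …}` in the compact monoid of matrices over `ℤ_p` contains an idempotent `E`
commuting with `Φ`, and `Φ^N ≡ E mod p²` for some `N ≥ 1`. Put `Ψ = Φ^N`, so
`det(Ψⁿ - 1) = det(Ψ - 1) · det(1 + Ψ + ⋯ + Ψⁿ⁻¹)`. On the image of `E` the geometric sum is
`n (1 + p Y)`, because `p^(2j) / (j + 1) ∈ p ℤ_p` for `j ≥ 1`; on the image of `1 - E` it is
`≡ 1 mod p`. Hence the second determinant has norm at least `‖n‖^d ≥ n^(-d)`, and
`c = ‖det(Ψ - 1)‖` works because `det(Φⁿ - 1)` divides `det(Ψⁿ - 1)`.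
-/

open Finset

section Topology

variable {M : Type*} [Monoid M] [TopologicalSpace M] [ContinuousMul M] [CompactSpace M] [T2Space M]

theorem exists_isIdempotentElem_mem_closure_range_pow_succ (x : M) :
    ∃ e ∈ closure (Set.range fun n : ℕ => x ^ (n + 1)), IsIdempotentElem e ∧ Commute x e := by
  set s := closure (Set.range fun n : ℕ => x ^ (n + 1))
  have hmul : ∀ a ∈ s, ∀ b ∈ s, a * b ∈ s := fun a ha b hb =>
    map_mem_closure₂ continuous_mul ha hb (by
      rintro _ ⟨m, rfl⟩ _ ⟨n, rfl⟩
      exact ⟨m + n + 1, by rw [← pow_add]; ring_nf⟩)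
  obtain ⟨e, hes, hee⟩ := exists_idempotent_in_compact_subsemigroup
    (fun r => continuous_id.mul continuous_const) s ⟨x, subset_closure ⟨0, pow_one x⟩⟩
    isClosed_closure.isCompact hmul
  have hcomm : s ⊆ {y | x * y = y * x} :=
    closure_minimal (by rintro _ ⟨n, rfl⟩; exact (Commute.self_pow x (n + 1)).eq)
      (isClosed_eq (continuous_const.mul continuous_id) (continuous_id.mul continuous_const))
  exact ⟨e, hes, hee, hcomm hes⟩

end Topology

section Algebra

theorem sum_range_one_add_pow {A : Type*} [Semiring A] (x : A) (n : ℕ) :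
    ∑ k ∈ range n, (1 + x) ^ k = ∑ j ∈ range n, (n.choose (j + 1) : A) * x ^ j := by
  induction n with
  | zero => simp
  | succ n ih =>
    rw [sum_range_succ, ih, add_comm 1 x, (Commute.one_right x).add_pow]
    simp only [Nat.choose_succ_succ', Nat.cast_add, add_mul, sum_add_distrib, one_pow, mul_one]
    rw [sum_range_succ (fun j => (n.choose (j + 1) : A) * x ^ j) n, Nat.choose_succ_self,
      Nat.cast_zero, zero_mul, add_zero, add_comm]
    exact congrArg (· + _) (sum_congr rfl fun j _ => (Nat.cast_commute _ _).eq.symm)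

variable {A : Type*} [Ring A] {e : A}

theorem IsIdempotentElem.add_pow (he : IsIdempotentElem e) {q : A} (hq : Commute e q) (k : ℕ) :
    (e + q) ^ k = e * (1 + q) ^ k + (1 - e) * q ^ k := by
  induction k with
  | zero => simp
  | succ k ih =>
    have ha : (1 + q) ^ k * e = e * (1 + q) ^ k :=
      (((Commute.one_right e).add_right hq).pow_right k).eq.symm
    have hb : q ^ k * e = e * q ^ k := (hq.pow_right k).eq.symm
    rw [pow_succ, ih, pow_succ, pow_succ]
    simp only [add_mul, mul_add, mul_assoc, ha, hb, ← mul_assoc e e, he.eq, ← mul_assoc (1 - e) e,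
      he.one_sub_mul_self, zero_mul]
    noncomm_ring

theorem IsIdempotentElem.sum_range_add_pow (he : IsIdempotentElem e) {q : A} (hq : Commute e q)
    (n : ℕ) : ∑ k ∈ range n, (e + q) ^ k =
      e * ∑ k ∈ range n, (1 + q) ^ k + (1 - e) * ∑ k ∈ range n, q ^ k := by
  simp only [he.add_pow hq, sum_add_distrib, mul_sum]

variable {R : Type*} [CommRing R] [Algebra R A]

theorem IsIdempotentElem.smul_add_one_sub_mul (he : IsIdempotentElem e) (c : R) (a b : A) :
    (c • e + (1 - e)) * (e * a + (1 - e) * b) = e * (c • a) + (1 - e) * b := by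
  have h1 : e * (1 - e) = 0 := he.mul_one_sub_self
  have h2 : (1 - e) * e = 0 := he.one_sub_mul_self
  have h3 : (1 - e) * (1 - e) = 1 - e := he.one_sub.eq
  simp only [add_mul, mul_add, smul_mul_assoc, ← mul_assoc, he.eq, h1, h2, h3, smul_zero,
    add_zero, zero_add, mul_smul_comm]

theorem IsIdempotentElem.smul_add_one_sub_mul_add_smul (he : IsIdempotentElem e) (c : R) :
    (c • e + (1 - e)) * (e + c • (1 - e)) = c • 1 := by
  have h1 : e * (1 - e) = 0 := he.mul_one_sub_self
  have h2 : (1 - e) * e = 0 := he.one_sub_mul_self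
  have h3 : (1 - e) * (1 - e) = 1 - e := he.one_sub.eq
  simp only [add_mul, mul_add, smul_mul_assoc, mul_smul_comm, he.eq, h1, h2, h3, smul_zero,
    add_zero, zero_add, ← smul_add, add_sub_cancel]

theorem Matrix.det_pow_sub_one {ι R : Type*} [Fintype ι] [DecidableEq ι] [CommRing R]
    (A : Matrix ι ι R) (n : ℕ) : (A ^ n - 1).det = (A - 1).det * (∑ k ∈ range n, A ^ k).det := by
  rw [← Matrix.det_mul, mul_geom_sum]

end Algebra

namespace PadicInt

variable {p : ℕ} [hp : Fact p.Prime]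

theorem inv_natCast_le_norm_natCast {n : ℕ} (hn : n ≠ 0) : (n : ℝ)⁻¹ ≤ ‖(n : ℤ_[p])‖ := by
  rw [norm_def, coe_natCast, Padic.norm_eq_zpow_neg_valuation (by exact_mod_cast hn),
    Padic.valuation_natCast, zpow_neg, zpow_natCast]
  exact inv_anti₀ (pow_pos (by exact_mod_cast hp.out.pos) _)
    (by exact_mod_cast Nat.le_of_dvd (Nat.pos_of_ne_zero hn) pow_padicValNat_dvd)

theorem natCast_mul_p_dvd_choose_mul_p_pow (n : ℕ) {j : ℕ} (hj : j ≠ 0) :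
    (n * p : ℤ_[p]) ∣ n.choose (j + 1) * (p : ℤ_[p]) ^ (2 * j) := by
  obtain _ | m := n
  · simp
  obtain ⟨v, u, hpu, hju⟩ := Nat.exists_eq_pow_mul_and_not_dvd j.succ_ne_zero p hp.out.ne_one
  have hv : v + 1 ≤ 2 * j := by
    have : v < p ^ v := Nat.lt_pow_self hp.out.one_lt
    have : p ^ v ≤ j + 1 := Nat.le_of_dvd j.succ_pos ⟨u, hju⟩
    omega
  obtain ⟨w, hw⟩ := (isUnit_iff.2 (norm_natCast_eq_one_iff.2
    ((Nat.Prime.coprime_iff_not_dvd hp.out).2 hpu))).exists_left_inv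
  have hchoose : ((m + 1 : ℕ) : ℤ_[p]) * m.choose j = (m + 1).choose (j + 1) * (p ^ v * u : ℕ) := by
    rw [← hju]; exact_mod_cast Nat.add_one_mul_choose_eq m j
  obtain ⟨r, hr⟩ : ∃ r, 2 * j = v + 1 + r := ⟨2 * j - (v + 1), by omega⟩
  refine ⟨w * m.choose j * (p : ℤ_[p]) ^ r, ?_⟩
  rw [hr]
  push_cast at hchoose ⊢
  linear_combination (-(w * (p : ℤ_[p]) ^ (r + 1))) * hchoose
    - ((m + 1 : ℕ).choose (j + 1) * (p : ℤ_[p]) ^ (v + 1 + r)) * hw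

variable {A : Type*} [Ring A] [Algebra ℤ_[p] A]

theorem exists_sum_range_one_add_p_sq_smul_pow (x : A) (n : ℕ) :
    ∃ y : A, ∑ k ∈ range n, (1 + (p : ℤ_[p]) ^ 2 • x) ^ k =
      (n : ℤ_[p]) • (1 + (p : ℤ_[p]) • y) := by
  obtain _ | m := n
  · exact ⟨0, by simp⟩
  choose b hb using fun j : ℕ =>
    natCast_mul_p_dvd_choose_mul_p_pow (p := p) (m + 1) j.succ_ne_zero
  refine ⟨∑ j ∈ range m, b j • x ^ (j + 1), ?_⟩
  rw [sum_range_one_add_pow, sum_range_succ', smul_add, smul_sum, smul_sum, add_comm]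
  congr 1
  · simp [Algebra.smul_def]
  · refine sum_congr rfl fun j _ => ?_
    rw [smul_pow, ← pow_mul, ← nsmul_eq_mul, ← Nat.cast_smul_eq_nsmul ℤ_[p], smul_smul, smul_smul,
      smul_smul, hb j]

variable {ι : Type*} [Fintype ι]

theorem exists_eq_add_p_pow_smul_of_mem_closure {S : Set (Matrix ι ι ℤ_[p])}
    {E : Matrix ι ι ℤ_[p]} (hE : E ∈ closure S) (k : ℕ) :
    ∃ X ∈ S, ∃ Γ, X = E + (p : ℤ_[p]) ^ k • Γ := by
  set U := ⋂ (i) (j), (fun X : Matrix ι ι ℤ_[p] => X i j) ⁻¹'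
    Metric.closedBall (E i j) ((p : ℝ) ^ (-(k : ℤ)))
  have hU : IsOpen U := isOpen_iInter_of_finite fun i => isOpen_iInter_of_finite fun j =>
    (IsUltrametricDist.isOpen_closedBall _
      (zpow_ne_zero _ (by exact_mod_cast hp.out.ne_zero))).preimage (continuous_id.matrix_elem i j)
  obtain ⟨X, hXU, hXS⟩ := mem_closure_iff.1 hE U hU (by simp [U])
  have hdvd : ∀ i j, (p : ℤ_[p]) ^ k ∣ X i j - E i j := fun i j => by
    rw [← Ideal.mem_span_singleton, ← norm_le_pow_iff_mem_span_pow, ← dist_eq_norm]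
    simp only [U, Set.mem_iInter, Set.mem_preimage, Metric.mem_closedBall] at hXU
    exact hXU i j
  choose Γ hΓ using hdvd
  exact ⟨X, hXS, Matrix.of Γ, by ext i j; simp [← hΓ]⟩

variable [DecidableEq ι]

theorem norm_det_one_add_p_smul (Y : Matrix ι ι ℤ_[p]) : ‖(1 + (p : ℤ_[p]) • Y).det‖ = 1 := by
  have hred : toZMod (1 + (p : ℤ_[p]) • Y).det = 1 := by
    have hp0 : (toZMod (p := p)).mapMatrix ((p : ℤ_[p]) • Y) = 0 := by ext; simp
    rw [RingHom.map_det, map_add, map_one, hp0, add_zero, Matrix.det_one]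
  rw [← isUnit_iff]
  by_contra hnu
  have : toZMod (1 + (p : ℤ_[p]) • Y).det = 0 := by
    rw [← RingHom.mem_ker, ker_toZMod]; exact hnu
  simp [this] at hred

theorem norm_det_pow_sub_one_le (A : Matrix ι ι ℤ_[p]) (n : ℕ) :
    ‖(A ^ n - 1).det‖ ≤ ‖(A - 1).det‖ := by
  rw [Matrix.det_pow_sub_one, norm_mul]
  exact mul_le_of_le_one_right (norm_nonneg _) (norm_le_one _)

theorem norm_pow_card_le_norm_det_smul_add_one_sub {E : Matrix ι ι ℤ_[p]}
    (hE : IsIdempotentElem E) (c : ℤ_[p]) : ‖c‖ ^ Fintype.card ι ≤ ‖(c • E + (1 - E)).det‖ := by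
  have := congrArg (‖Matrix.det ·‖) (hE.smul_add_one_sub_mul_add_smul c)
  simp only [Matrix.det_mul, Matrix.det_smul, Matrix.det_one, mul_one, norm_mul, norm_pow] at this
  rw [← this]
  exact mul_le_of_le_one_right (norm_nonneg _) (norm_le_one _)

theorem norm_natCast_pow_card_le_norm_det_sum_range_pow {E Ψ Γ : Matrix ι ι ℤ_[p]}
    (hE : IsIdempotentElem E) (hΨE : Commute Ψ E) (hΨ : Ψ = E + (p : ℤ_[p]) ^ 2 • Γ) {n : ℕ}
    (hn : n ≠ 0) : ‖(n : ℤ_[p])‖ ^ Fintype.card ι ≤ ‖(∑ k ∈ range n, Ψ ^ k).det‖ := by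
  have hQ : Commute E ((p : ℤ_[p]) ^ 2 • Γ) := by
    rw [show (p : ℤ_[p]) ^ 2 • Γ = Ψ - E by rw [hΨ]; abel]
    exact hΨE.symm.sub_right (Commute.refl E)
  obtain ⟨Y, hY⟩ := exists_sum_range_one_add_p_sq_smul_pow (p := p) Γ n
  obtain ⟨Z, hZ⟩ : ∃ Z, ∑ k ∈ range n, ((p : ℤ_[p]) ^ 2 • Γ) ^ k = 1 + (p : ℤ_[p]) • Z := by
    obtain ⟨m, rfl⟩ := Nat.exists_eq_succ_of_ne_zero hn
    refine ⟨((p : ℤ_[p]) • Γ) * ∑ k ∈ range m, ((p : ℤ_[p]) ^ 2 • Γ) ^ k, ?_⟩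
    rw [geom_sum_succ, add_comm, pow_two, mul_smul, smul_mul_assoc]
  have hunit : E * (1 + (p : ℤ_[p]) • Y) + (1 - E) * (1 + (p : ℤ_[p]) • Z)
      = 1 + (p : ℤ_[p]) • (E * Y + (1 - E) * Z) := by
    simp only [mul_add, mul_one, mul_smul_comm, smul_add]
    abel
  rw [hΨ, hE.sum_range_add_pow hQ, hY, hZ, ← hE.smul_add_one_sub_mul, hunit, Matrix.det_mul,
    norm_mul, norm_det_one_add_p_smul, mul_one]
  exact norm_pow_card_le_norm_det_smul_add_one_sub hE _

theorem exists_isIdempotentElem_commute_pow_eq_add_p_pow_smul (M : Matrix ι ι ℤ_[p]) :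
    ∃ E, IsIdempotentElem E ∧ Commute M E ∧
      ∀ k : ℕ, ∃ N ≠ 0, ∃ Γ, M ^ N = E + (p : ℤ_[p]) ^ k • Γ := by
  have : CompactSpace (Matrix ι ι ℤ_[p]) := inferInstanceAs (CompactSpace (ι → ι → ℤ_[p]))
  obtain ⟨E, hEM, hE, hME⟩ := exists_isIdempotentElem_mem_closure_range_pow_succ M
  refine ⟨E, hE, hME, fun k => ?_⟩
  obtain ⟨_, ⟨N, rfl⟩, hN⟩ := exists_eq_add_p_pow_smul_of_mem_closure hEM k
  exact ⟨N + 1, N.succ_ne_zero, hN⟩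

end PadicInt

theorem padic_det_pow_sub_one_lower_bound_general (p : ℕ) [Fact p.Prime] (d : ℕ)
    (Φ : Matrix (Fin d) (Fin d) ℤ_[p])
    (h : ∀ n : ℕ, 1 ≤ n → (Φ ^ n - 1).det ≠ 0) :
    ∃ c : ℝ, 0 < c ∧ ∀ n : ℕ, 1 ≤ n →
      c / (n : ℝ) ^ d ≤ ‖(Φ ^ n - 1).det‖ ∧ ‖(Φ ^ n - 1).det‖ ≤ 1 := by
  obtain ⟨E, hE, hΦE, hΦN⟩ := PadicInt.exists_isIdempotentElem_commute_pow_eq_add_p_pow_smul Φ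
  obtain ⟨N, hN, Γ, hΓ⟩ := hΦN 2
  set c := ‖(Φ ^ N - 1).det‖
  refine ⟨c, norm_pos_iff.2 (h N (Nat.one_le_iff_ne_zero.2 hN)), fun n hn =>
    ⟨?_, PadicInt.norm_le_one _⟩⟩
  have hn0 : n ≠ 0 := Nat.one_le_iff_ne_zero.1 hn
  calc c / (n : ℝ) ^ d = c * ((n : ℝ)⁻¹) ^ d := by rw [inv_pow, div_eq_mul_inv]
    _ ≤ c * ‖(n : ℤ_[p])‖ ^ d := by
      gcongr
      exact PadicInt.inv_natCast_le_norm_natCast hn0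
    _ ≤ c * ‖(∑ k ∈ range n, (Φ ^ N) ^ k).det‖ := by
      gcongr
      simpa using
        PadicInt.norm_natCast_pow_card_le_norm_det_sum_range_pow hE (hΦE.pow_left N) hΓ hn0
    _ = ‖((Φ ^ N) ^ n - 1).det‖ := by rw [Matrix.det_pow_sub_one, norm_mul]
    _ = ‖((Φ ^ n) ^ N - 1).det‖ := by rw [← pow_mul, ← pow_mul, mul_comm]
    _ ≤ ‖(Φ ^ n - 1).det‖ := PadicInt.norm_det_pow_sub_one_le _ _

/-- For a `d×d` matrix `Φ` over `ℤ_p` with `det(Φⁿ - Id) ≠ 0` for all `n ≥ 1`,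
there is a constant `c > 0` with `‖det(Φⁿ - Id)‖ ≥ c / n^d` for all `n ≥ 1`
(and trivially `‖det(Φⁿ - Id)‖ ≤ 1`). -/
theorem padic_det_pow_sub_one_lower_bound (p : ℕ) [Fact p.Prime] (d : ℕ) (hd : 1 ≤ d)
    (Φ : Matrix (Fin d) (Fin d) ℤ_[p])
    (h : ∀ n : ℕ, 1 ≤ n → (Φ ^ n - 1).det ≠ 0) :
    ∃ c : ℝ, 0 < c ∧ ∀ n : ℕ, 1 ≤ n →
      c / (n : ℝ) ^ d ≤ ‖(Φ ^ n - 1).det‖ ∧ ‖(Φ ^ n - 1).det‖ ≤ 1 :=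
  padic_det_pow_sub_one_lower_bound_general p d Φ h
end

section
/- Let p be a prime, d ≥ 1, and Φ a d×d matrix over ℤ_p with det(Φⁿ − Id) ≠ 0 for all n ≥ 1, and suppose that the reduction of Φ modulo p (a matrix over 𝔽_p) is not nilpotent (equivalently, some eigenvalue of Φ in an algebraic closure of ℚ_p has absolute value 1). Then the sequence of Reidemeister numbers u(n) = ‖det(Φⁿ − Id)‖_p^{-1} (a sequence of positive integers) does not satisfy any linear recurrence: there are no D ≥ 1 and complex constants c₀, …, c_{D−1} such that u(n + D) = ∑_{i=0}^{D−1} cᵢ·u(n + i) for all n ≥ 1. -/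
/-!
Modulo `p` some power `Φ ^ e` becomes idempotent; then `Φ ^ (e p ^ (k + 1)) ≡ Φ ^ (e p ^ k)`
mod `p ^ (k + 1)`, so these powers converge `p`-adically to an idempotent `Q` commuting with `Φ`,
nonzero because `Φ` is not nilpotent mod `p`. Since `det (Q - 1) = 0`, the Reidemeister number
at `e p ^ k` is at least `p ^ k`.

For `X` commuting with `Q`, `det X` is the product of the determinants of `X` on the ranges of
`Q` and of `1 - Q`. For `X = Φ ^ m - 1` with `m ≥ e` the second factor is a unit, as
`Φ ^ m (1 - Q) ≡ 0` mod `p`, and `Φ` is invertible on the range of `Q`. So for `m = e p ^ k - j`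
the norm of `det (Φ ^ m - 1)` is that of the determinant of `Φ ^ (e p ^ k) - Φ ^ j ≡ Q - Φ ^ j`
on the range of `Q`, which is eventually constant and nonzero. The Reidemeister numbers at
`e p ^ k - j` thus stay bounded while those at `e p ^ k` do not, which no linear recurrence
allows.
-/

open Filter Finset Topology

theorem exists_pos_isIdempotentElem_pow {M : Type*} [Monoid M] [Finite M] (x : M) :
    ∃ e, 0 < e ∧ IsIdempotentElem (x ^ e) := by
  obtain ⟨a, b, hne, hab⟩ := Finite.exists_ne_map_eq_of_infinite (fun n : ℕ => x ^ n)
  wlog hlt : a < b generalizing a b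
  · exact this b a hne.symm hab.symm (by omega)
  obtain ⟨T, rfl⟩ := Nat.exists_eq_add_of_lt hlt
  have hper : ∀ c, x ^ (a + c * (T + 1)) = x ^ a := by
    intro c
    induction c with
    | zero => simp
    | succ c ih =>
      rw [add_mul, one_mul, ← add_assoc, pow_add, ih, ← pow_add, ← add_assoc]
      exact hab.symm
  have hper' : ∀ m, a ≤ m → ∀ c, x ^ (m + c * (T + 1)) = x ^ m := by
    intro m hm c
    obtain ⟨m, rfl⟩ := Nat.exists_eq_add_of_le hm
    rw [add_comm a, add_assoc, pow_add, hper, ← pow_add]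
  refine ⟨(a + 1) * (T + 1), by positivity, ?_⟩
  rw [IsIdempotentElem, ← pow_add, hper' _ (by nlinarith)]

theorem not_exists_linear_recurrence_of_tendsto {R : Type*} [SeminormedRing R] {u : ℕ → R}
    {N : ℕ → ℕ} (hN : Tendsto N atTop atTop)
    (hspike : Tendsto (fun k => ‖u (N k)‖) atTop atTop)
    (hconv : ∀ j, 1 ≤ j → ∃ l, Tendsto (fun k => u (N k - j)) atTop (𝓝 l)) :
    ¬ ∃ D, ∃ c : Fin D → R, ∀ n, 1 ≤ n →
      u (n + D) = ∑ i : Fin D, c i * u (n + i) := by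
  rintro ⟨D, c, hrec⟩
  choose l hl using hconv
  have hsum : Tendsto (fun k => ∑ i : Fin D, c i * u (N k - (D - i))) atTop
      (𝓝 (∑ i : Fin D, c i * l (D - i) (by have := i.2; omega))) :=
    tendsto_finsetSum _ fun i _ => (hl _ _).const_mul (c i)
  have hrec' : (fun k => ∑ i : Fin D, c i * u (N k - (D - i))) =ᶠ[atTop] fun k => u (N k) := by
    filter_upwards [hN.eventually_ge_atTop (D + 1)] with k hk
    have hk' := hrec (N k - D) (by omega)
    rw [Nat.sub_add_cancel (by omega)] at hk'
    rw [hk']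
    refine sum_congr rfl fun i _ => ?_
    congr 2
    have := i.2
    omega
  exact not_tendsto_atTop_of_tendsto_nhds (hsum.congr' hrec').norm hspike

section
variable {A : Type*} [Ring A] {Q X Y : A}

theorem mul_add_one_sub_mul_mul_add_one_sub (hQ : IsIdempotentElem Q) (hY : Commute Y Q) :
    (X * Q + (1 - Q)) * (Y * Q + (1 - Q)) = X * Y * Q + (1 - Q) := by
  have e1 : X * Q * (Y * Q) = X * Y * Q := by
    rw [mul_assoc, ← mul_assoc Q, ← hY.eq, mul_assoc Y, hQ.eq, ← mul_assoc]
  have e2 : X * Q * (1 - Q) = 0 := by rw [mul_assoc, hQ.mul_one_sub_self, mul_zero]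
  have e3 : (1 - Q) * (Y * Q) = 0 := by rw [hY.eq, ← mul_assoc, hQ.one_sub_mul_self, zero_mul]
  rw [add_mul, mul_add, mul_add, e1, e2, e3, hQ.one_sub.eq, add_zero, zero_add]

theorem mul_add_one_sub_mul_mul_one_sub_add (hQ : IsIdempotentElem Q) (hX : Commute X Q) :
    (X * Q + (1 - Q)) * (X * (1 - Q) + Q) = X := by
  have e1 : X * Q * (X * (1 - Q)) = 0 := by
    rw [mul_assoc, ← mul_assoc Q, ← hX.eq, mul_assoc X Q, hQ.mul_one_sub_self, mul_zero,
      mul_zero]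
  have e2 : (1 - Q) * (X * (1 - Q)) = X * (1 - Q) := by
    rw [← mul_assoc, ((Commute.one_left X).sub_left hX.symm).eq, mul_assoc, hQ.one_sub.eq]
  rw [add_mul, mul_add, mul_add, e1, e2, mul_assoc, hQ.eq, hQ.one_sub_mul_self, zero_add,
    add_zero, ← mul_add, add_sub_cancel, mul_one]

theorem sub_one_sub_mul_self (hQ : IsIdempotentElem Q) : (Q - (1 - Q)) * (Q - (1 - Q)) = 1 := by
  rw [sub_mul, mul_sub Q Q, mul_sub (1 - Q) Q, hQ.eq, hQ.mul_one_sub_self, hQ.one_sub_mul_self,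
    hQ.one_sub.eq]
  abel

end

namespace Matrix

variable {n R S : Type*} [Fintype n] [DecidableEq n] [CommRing R] [CommRing S]

/-- For `X` commuting with the idempotent `Q`, the determinant of `X` on the range of `Q`. -/
def detOnRange (Q X : Matrix n n R) : R := (X * Q + (1 - Q)).det

variable {Q X Y : Matrix n n R}

theorem detOnRange_mul (hQ : IsIdempotentElem Q) (hY : Commute Y Q) :
    detOnRange Q (X * Y) = detOnRange Q X * detOnRange Q Y := by
  rw [detOnRange, detOnRange, detOnRange, ← det_mul, mul_add_one_sub_mul_mul_add_one_sub hQ hY]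

theorem detOnRange_pow (hQ : IsIdempotentElem Q) (hX : Commute X Q) (m : ℕ) :
    detOnRange Q (X ^ m) = detOnRange Q X ^ m := by
  induction m with
  | zero => simp [detOnRange]
  | succ m ih => rw [pow_succ, detOnRange_mul hQ hX, ih, pow_succ]

theorem det_eq_detOnRange_mul_detOnRange_one_sub (hQ : IsIdempotentElem Q) (hX : Commute X Q) :
    X.det = detOnRange Q X * detOnRange (1 - Q) X := by
  rw [detOnRange, detOnRange, ← det_mul, sub_sub_cancel,
    mul_add_one_sub_mul_mul_one_sub_add hQ hX]

theorem _root_.RingHom.map_detOnRange (f : R →+* S) (Q X : Matrix n n R) :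
    f (detOnRange Q X) = detOnRange (f.mapMatrix Q) (f.mapMatrix X) := by
  rw [detOnRange, detOnRange, RingHom.map_det, map_add, map_mul, map_sub, map_one]

theorem det_sub_one_eq_zero_of_isIdempotentElem [IsDomain R] (hQ : IsIdempotentElem Q)
    (hQ0 : Q ≠ 0) : (Q - 1).det = 0 := by
  by_contra hdet
  refine hQ0 (ext fun i j => ?_)
  have hcol : (Q - 1) *ᵥ (Q *ᵥ Pi.single j 1) = 0 := by
    rw [mulVec_mulVec, sub_mul, hQ.eq, one_mul, sub_self, zero_mulVec]
  simpa [mulVec_single_one] using congrFun (eq_zero_of_mulVec_eq_zero hdet hcol) i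

end Matrix

theorem IsUltrametricDist.norm_eq_of_norm_sub_lt {E : Type*} [SeminormedAddGroup E]
    [IsUltrametricDist E] {x y : E} (h : ‖x - y‖ < ‖y‖) : ‖x‖ = ‖y‖ := by
  rw [← sub_add_cancel x y, norm_add_eq_max_of_norm_ne_norm h.ne, max_eq_right h.le]

namespace PadicInt

variable {p : ℕ} [Fact p.Prime]

theorem norm_sub_le_of_toZModPow_eq {k : ℕ} {x y : ℤ_[p]} (h : toZModPow k x = toZModPow k y) :
    ‖x - y‖ ≤ (p : ℝ) ^ (-k : ℤ) := by
  rw [norm_le_pow_iff_mem_span_pow, ← ker_toZModPow, RingHom.mem_ker, map_sub, h, sub_self]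

theorem isUnit_of_toZModPow_one_eq_one {x : ℤ_[p]} (h : toZModPow 1 x = 1) : IsUnit x := by
  have hlt : ‖x - 1‖ < ‖(1 : ℤ_[p])‖ := by
    refine (norm_sub_le_of_toZModPow_eq (h.trans (map_one _).symm)).trans_lt ?_
    rw [norm_one, Nat.cast_one, zpow_neg_one]
    exact inv_lt_one_of_one_lt₀ (by exact_mod_cast (Fact.out : p.Prime).one_lt)
  rw [isUnit_iff, IsUltrametricDist.norm_eq_of_norm_sub_lt hlt, norm_one]

theorem eventually_norm_eq_of_toZModPow_eq {x : ℕ → ℤ_[p]} {y : ℤ_[p]} (hy : y ≠ 0)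
    (h : ∀ k, toZModPow k (x k) = toZModPow k y) : ∀ᶠ k in atTop, ‖x k‖ = ‖y‖ := by
  have hp : (p : ℝ)⁻¹ < 1 :=
    inv_lt_one_of_one_lt₀ (by exact_mod_cast (Fact.out : p.Prime).one_lt)
  have hsmall : ∀ᶠ k : ℕ in atTop, (p : ℝ)⁻¹ ^ k < ‖y‖ :=
    (tendsto_pow_atTop_nhds_zero_of_lt_one (by positivity) hp).eventually
      (gt_mem_nhds (norm_pos_iff.2 hy))
  filter_upwards [hsmall] with k hk
  refine IsUltrametricDist.norm_eq_of_norm_sub_lt ((norm_sub_le_of_toZModPow_eq (h k)).trans_lt ?_)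
  rwa [zpow_neg, zpow_natCast, ← inv_pow]

theorem exists_toZModPow_eq (a : ℕ → ℤ_[p])
    (h : ∀ k, toZModPow k (a (k + 1)) = toZModPow k (a k)) :
    ∃ q : ℤ_[p], ∀ k, toZModPow k q = toZModPow k (a k) := by
  set f : ℕ → ℤ := fun k => ((toZModPow k (a k)).val : ℤ)
  have hf : ∀ k, ((f k : ℤ) : ZMod (p ^ k)) = toZModPow k (a k) := fun k => by
    simp [f]
  have hdvd : ∀ k, (p : ℤ) ^ k ∣ f (k + 1) - f k := fun k => by
    have : ((f (k + 1) : ℤ) : ZMod (p ^ k)) = f k := by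
      rw [hf, ← h, ← cast_toZModPow k (k + 1) k.le_succ, ZMod.cast_eq_val]
      simp [f]
    exact_mod_cast (ZMod.intCast_eq_intCast_iff_dvd_sub _ _ _).1 this.symm
  exact ⟨_, fun k => (toZModPow_ofIntSeq_of_pow_dvd_sub f p hdvd k).trans (hf k)⟩

end PadicInt

namespace Matrix

variable {n : Type*} [Fintype n] [DecidableEq n] {p : ℕ} [Fact p.Prime]
  {A B Φ Q : Matrix n n ℤ_[p]} {e : ℕ}

noncomputable abbrev toZModPow (k : ℕ) : Matrix n n ℤ_[p] →+* Matrix n n (ZMod (p ^ k)) :=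
  (PadicInt.toZModPow k).mapMatrix

theorem toZModPow_eq_zero_iff {k : ℕ} {X : Matrix n n ℤ_[p]} :
    toZModPow k X = 0 ↔ ∃ Y, X = (p : ℤ_[p]) ^ k • Y := by
  constructor
  · intro hX
    have : ∀ i j, (p : ℤ_[p]) ^ k ∣ X i j := fun i j => by
      rw [← Ideal.mem_span_singleton, ← PadicInt.ker_toZModPow, RingHom.mem_ker]
      simpa using congrFun (congrFun hX i) j
    choose Y hY using this
    exact ⟨of Y, ext fun i j => by simp [hY]⟩
  · rintro ⟨Y, rfl⟩
    ext i j
    simp only [toZModPow, RingHom.mapMatrix_apply, map_apply, smul_apply, smul_eq_mul, map_mul,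
      map_pow, map_natCast, zero_apply]
    rw [← Nat.cast_pow, ZMod.natCast_self, zero_mul]

theorem toZModPow_eq_of_le {j k : ℕ} (hjk : j ≤ k)
    (h : toZModPow k A = toZModPow k B) :
    toZModPow j A = toZModPow j B := by
  rw [← sub_eq_zero, ← map_sub, toZModPow_eq_zero_iff] at h ⊢
  obtain ⟨Y, hY⟩ := h
  exact ⟨(p : ℤ_[p]) ^ (k - j) • Y, by
    rw [hY, smul_smul, ← pow_add, Nat.add_sub_cancel' hjk]⟩

theorem eq_of_forall_toZModPow_eq (h : ∀ k, toZModPow k A = toZModPow k B) : A = B :=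
  ext fun i j => PadicInt.ext_of_toZModPow.1 fun k => by simpa using congrFun (congrFun (h k) i) j

theorem toZModPow_succ_pow_prime_eq (hAB : Commute A B) (h1 : toZModPow 1 A = toZModPow 1 B)
    {k : ℕ} (hk : toZModPow k A = toZModPow k B) :
    toZModPow (k + 1) (A ^ p) = toZModPow (k + 1) (B ^ p) := by
  -- `A ^ p - B ^ p = (∑ A ^ i B ^ (p - 1 - i)) (A - B)`, the sum being `≡ p B ^ (p - 1) ≡ 0 [p]`
  obtain ⟨Y, hY⟩ :
      ∃ Y, ∑ i ∈ range p, A ^ i * B ^ (p - 1 - i) = (p : ℤ_[p]) ^ 1 • Y := by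
    rw [← toZModPow_eq_zero_iff, RingHom.map_geom_sum₂, h1, geom_sum₂_self,
      ← map_natCast (toZModPow 1) p, ← map_pow, ← map_mul, toZModPow_eq_zero_iff]
    exact ⟨B ^ (p - 1), by rw [pow_one, ← nsmul_eq_mul, Nat.cast_smul_eq_nsmul]⟩
  obtain ⟨X, hX⟩ := toZModPow_eq_zero_iff.1 (show toZModPow k (A - B) = 0 by
    rw [map_sub, hk, sub_self])
  rw [← sub_eq_zero, ← map_sub, ← hAB.geom_sum₂_mul, hY, hX, smul_mul_smul_comm,
    ← pow_add, add_comm, toZModPow_eq_zero_iff]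
  exact ⟨_, rfl⟩

theorem toZModPow_succ_pow_prime_pow_eq (hAB : Commute A B)
    (h : toZModPow 1 A = toZModPow 1 B) (k : ℕ) :
    toZModPow (k + 1) (A ^ p ^ k) = toZModPow (k + 1) (B ^ p ^ k) := by
  induction k with
  | zero => simpa using h
  | succ k ih =>
    rw [pow_succ p k, pow_mul, pow_mul]
    exact toZModPow_succ_pow_prime_eq (hAB.pow_pow _ _) (by simp only [map_pow, h]) ih

theorem exists_toZModPow_eq (a : ℕ → Matrix n n ℤ_[p])
    (h : ∀ k, toZModPow k (a (k + 1)) = toZModPow k (a k)) :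
    ∃ Q, ∀ k, toZModPow k Q = toZModPow k (a k) := by
  choose q hq using fun i j => PadicInt.exists_toZModPow_eq (fun k => a k i j)
    fun k => by simpa using congrFun (congrFun (h k) i) j
  exact ⟨of q, fun k => ext fun i j => by simpa using hq i j k⟩

theorem exists_isIdempotentElem_lift (M : Matrix n n ℤ_[p])
    (hM : IsIdempotentElem (toZModPow 1 M)) :
    ∃ Q, IsIdempotentElem Q ∧ (∀ X, Commute X M → Commute X Q) ∧
      toZModPow 1 Q = toZModPow 1 M ∧
      ∀ k, toZModPow k (M ^ p ^ k) = toZModPow k Q := by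
  have hMp : toZModPow 1 (M ^ p) = toZModPow 1 M := by
    have := hM.pow_succ_eq (p - 1)
    rwa [Nat.sub_add_cancel (Fact.out : p.Prime).one_le, ← map_pow] at this
  have hstep : ∀ k, toZModPow k (M ^ p ^ (k + 1)) = toZModPow k (M ^ p ^ k) := fun k =>
    toZModPow_eq_of_le k.le_succ <| by
      simpa [← pow_mul, ← pow_succ'] using
        toZModPow_succ_pow_prime_pow_eq ((Commute.refl M).pow_left p) hMp k
  have hsq : ∀ k, toZModPow k (M ^ p ^ k * M ^ p ^ k) = toZModPow k (M ^ p ^ k) := fun k =>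
    toZModPow_eq_of_le k.le_succ <| by
      simpa [(Commute.refl M).mul_pow] using toZModPow_succ_pow_prime_pow_eq
        ((Commute.refl M).mul_left (Commute.refl M)) (by rw [map_mul, hM.eq]) k
  obtain ⟨Q, hQ⟩ := exists_toZModPow_eq (fun k => M ^ p ^ k) hstep
  refine ⟨Q, eq_of_forall_toZModPow_eq fun k => ?_, fun X hX =>
    eq_of_forall_toZModPow_eq fun k => ?_, by rw [hQ]; simpa using hMp, fun k => (hQ k).symm⟩
  · rw [map_mul, hQ, ← map_mul, hsq]
  · rw [map_mul, map_mul, hQ, ← map_mul, ← map_mul, (hX.pow_right _).eq]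

theorem isUnit_det_of_toZModPow_one_eq_one {X : Matrix n n ℤ_[p]} (h : toZModPow 1 X = 1) :
    IsUnit X.det :=
  PadicInt.isUnit_of_toZModPow_one_eq_one (by rw [RingHom.map_det, ← toZModPow, h, det_one])

theorem map_toZMod_eq_zero_of_toZModPow_one_eq_zero {X : Matrix n n ℤ_[p]}
    (h : toZModPow 1 X = 0) : X.map PadicInt.toZMod = 0 := by
  obtain ⟨Y, rfl⟩ := toZModPow_eq_zero_iff.1 h
  ext i j
  simp

theorem isUnit_detOnRange_one_sub_pow_sub_one (hQ : IsIdempotentElem Q)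
    (hmod : toZModPow 1 Q = toZModPow 1 (Φ ^ e)) {m : ℕ} (hm : e ≤ m) :
    IsUnit (detOnRange (1 - Q) (Φ ^ m - 1)) := by
  have hq := hQ.map (toZModPow 1)
  have hkill : toZModPow 1 (Φ ^ m) * (1 - toZModPow 1 Q) = 0 := by
    rw [← Nat.sub_add_cancel hm, pow_add, map_mul, ← hmod, mul_assoc, hq.mul_one_sub_self,
      mul_zero]
  have hred : toZModPow 1 ((Φ ^ m - 1) * (1 - Q) + (1 - (1 - Q))) =
      toZModPow 1 Q - (1 - toZModPow 1 Q) := by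
    rw [map_add, map_mul, map_sub, map_sub, map_one, sub_mul, hkill, one_mul, sub_sub_cancel]
    abel
  rw [detOnRange, ← isUnit_mul_self_iff, ← det_mul]
  exact isUnit_det_of_toZModPow_one_eq_one (by rw [map_mul, hred, sub_one_sub_mul_self hq])

theorem isUnit_detOnRange_pow (hQ : IsIdempotentElem Q) (hΦQ : Commute Φ Q)
    (hmod : toZModPow 1 Q = toZModPow 1 (Φ ^ e)) (he : e ≠ 0) (j : ℕ) :
    IsUnit (detOnRange Q (Φ ^ j)) := by
  have hunit : IsUnit (detOnRange Q Φ ^ e) := by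
    rw [← detOnRange_pow hQ hΦQ]
    refine isUnit_det_of_toZModPow_one_eq_one ?_
    rw [map_add, map_mul, map_sub, map_one, ← hmod, (hQ.map _).eq, add_sub_cancel]
  rw [detOnRange_pow hQ hΦQ]
  exact ((isUnit_pow_iff he).1 hunit).pow j

theorem norm_det_pow_sub_one_eq_norm_detOnRange (hQ : IsIdempotentElem Q) (hΦQ : Commute Φ Q)
    (hmod : toZModPow 1 Q = toZModPow 1 (Φ ^ e)) {m : ℕ} (hm : e ≤ m) :
    ‖(Φ ^ m - 1).det‖ = ‖detOnRange Q (Φ ^ m - 1)‖ := by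
  rw [det_eq_detOnRange_mul_detOnRange_one_sub hQ ((hΦQ.pow_left m).sub_left (Commute.one_left Q)),
    norm_mul, PadicInt.isUnit_iff.1 (isUnit_detOnRange_one_sub_pow_sub_one hQ hmod hm), mul_one]

theorem norm_det_pow_sub_one_le (hQ : IsIdempotentElem Q) (hQ0 : Q ≠ 0)
    (hlim : ∀ k, toZModPow k (Φ ^ (e * p ^ k)) = toZModPow k Q) (k : ℕ) :
    ‖(Φ ^ (e * p ^ k) - 1).det‖ ≤ (p : ℝ) ^ (-k : ℤ) := by
  have := PadicInt.norm_sub_le_of_toZModPow_eq (x := (Φ ^ (e * p ^ k) - 1).det)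
    (y := (Q - 1).det) (by
      rw [RingHom.map_det, RingHom.map_det, ← toZModPow, map_sub, map_sub, hlim])
  rwa [det_sub_one_eq_zero_of_isIdempotentElem hQ hQ0, sub_zero] at this

theorem tendsto_inv_norm_det_pow_sub_one (hQ : IsIdempotentElem Q) (hQ0 : Q ≠ 0)
    (hlim : ∀ k, toZModPow k (Φ ^ (e * p ^ k)) = toZModPow k Q)
    (h : ∀ k, (Φ ^ (e * p ^ k) - 1).det ≠ 0) :
    Tendsto (fun k => ‖(Φ ^ (e * p ^ k) - 1).det‖⁻¹) atTop atTop := by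
  refine tendsto_atTop_mono (fun k => ?_) (tendsto_pow_atTop_atTop_of_one_lt (r := (p : ℝ))
    (by exact_mod_cast (Fact.out : p.Prime).one_lt))
  have := inv_anti₀ (norm_pos_iff.2 (h k)) (norm_det_pow_sub_one_le hQ hQ0 hlim k)
  simpa using this

theorem eventually_norm_det_pow_sub_one_eq (hQ : IsIdempotentElem Q) (hΦQ : Commute Φ Q)
    (hmod : toZModPow 1 Q = toZModPow 1 (Φ ^ e)) (he : 0 < e)
    (hlim : ∀ k, toZModPow k (Φ ^ (e * p ^ k)) = toZModPow k Q) {j : ℕ}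
    (hj : (Φ ^ j - 1).det ≠ 0) :
    ∀ᶠ k in atTop, ‖(Φ ^ (e * p ^ k - j) - 1).det‖ = ‖detOnRange Q (1 - Φ ^ j)‖ := by
  have hQj : detOnRange Q (Q - Φ ^ j) = detOnRange Q (1 - Φ ^ j) := by
    rw [detOnRange, detOnRange, sub_mul, sub_mul, hQ.eq, one_mul]
  have hne : detOnRange Q (Q - Φ ^ j) ≠ 0 := by
    have hj' : (1 - Φ ^ j).det ≠ 0 := by
      rw [← neg_sub, det_neg]
      exact mul_ne_zero (pow_ne_zero _ (neg_ne_zero.2 one_ne_zero)) hj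
    rw [det_eq_detOnRange_mul_detOnRange_one_sub hQ
      ((Commute.one_left Q).sub_left (hΦQ.pow_left j))] at hj'
    exact hQj ▸ left_ne_zero_of_mul hj'
  have hlimj := PadicInt.eventually_norm_eq_of_toZModPow_eq
    (x := fun k => detOnRange Q (Φ ^ (e * p ^ k) - Φ ^ j)) hne fun k => by
    rw [RingHom.map_detOnRange, RingHom.map_detOnRange, ← toZModPow, map_sub, map_sub, hlim]
  have hN : Tendsto (fun k => e * p ^ k) atTop atTop :=
    tendsto_atTop_mono (fun k => Nat.le_mul_of_pos_left _ he)
      (tendsto_pow_atTop_atTop_of_one_lt (Fact.out : p.Prime).one_lt)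
  filter_upwards [hlimj, hN.eventually_ge_atTop (e + j)] with k hk hkj
  calc ‖(Φ ^ (e * p ^ k - j) - 1).det‖
      = ‖detOnRange Q (Φ ^ (e * p ^ k - j) - 1) * detOnRange Q (Φ ^ j)‖ := by
        rw [norm_mul, PadicInt.isUnit_iff.1 (isUnit_detOnRange_pow hQ hΦQ hmod he.ne' j), mul_one,
          norm_det_pow_sub_one_eq_norm_detOnRange hQ hΦQ hmod (by omega)]
    _ = ‖detOnRange Q (Φ ^ (e * p ^ k) - Φ ^ j)‖ := by
        rw [← detOnRange_mul hQ (hΦQ.pow_left j), sub_mul, one_mul, ← pow_add,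
          Nat.sub_add_cancel (by omega)]
    _ = ‖detOnRange Q (1 - Φ ^ j)‖ := by rw [hk, hQj]

end Matrix

open Matrix in
theorem reidemeister_sequence_not_linear_recurrence_general (p : ℕ) [Fact p.Prime]
    (d : ℕ) (Φ : Matrix (Fin d) (Fin d) ℤ_[p])
    (h : ∀ n : ℕ, 1 ≤ n → (Φ ^ n - 1).det ≠ 0)
    (hnil : ¬ IsNilpotent (Φ.map (PadicInt.toZMod (p := p)))) :
    ¬ ∃ (D : ℕ), 1 ≤ D ∧ ∃ c : Fin D → ℂ,
      ∀ n : ℕ, 1 ≤ n →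
        ((‖(Φ ^ (n + D) - 1).det‖⁻¹ : ℝ) : ℂ) =
          ∑ i : Fin D, c i * ((‖(Φ ^ (n + (i : ℕ)) - 1).det‖⁻¹ : ℝ) : ℂ) := by
  have hp : 1 < p := (Fact.out : p.Prime).one_lt
  obtain ⟨e, he, hidem⟩ := exists_pos_isIdempotentElem_pow (toZModPow 1 Φ)
  obtain ⟨Q, hQ, hcomm, hmod, hlim⟩ := exists_isIdempotentElem_lift (Φ ^ e) (by rwa [map_pow])
  replace hlim : ∀ k, toZModPow k (Φ ^ (e * p ^ k)) = toZModPow k Q := fun k => by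
    rw [pow_mul]; exact hlim k
  have hΦQ : Commute Φ Q := hcomm Φ ((Commute.refl Φ).pow_right e)
  have hQ0 : Q ≠ 0 := by
    rintro rfl
    refine hnil ⟨e, ?_⟩
    rw [← RingHom.mapMatrix_apply, ← map_pow]
    exact map_toZMod_eq_zero_of_toZModPow_one_eq_zero (by rw [← hmod, map_zero])
  have hN : Tendsto (fun k => e * p ^ k) atTop atTop :=
    tendsto_atTop_mono (fun k => Nat.le_mul_of_pos_left _ he)
      (tendsto_pow_atTop_atTop_of_one_lt hp)
  rintro ⟨D, -, c, hrec⟩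
  refine not_exists_linear_recurrence_of_tendsto
    (u := fun m => ((‖(Φ ^ m - 1).det‖⁻¹ : ℝ) : ℂ)) hN ?_ (fun j hj => ?_) ⟨D, c, hrec⟩
  · simpa using tendsto_inv_norm_det_pow_sub_one hQ hQ0 hlim fun k =>
      h _ (Nat.one_le_iff_ne_zero.2 (by positivity))
  · exact ⟨_, tendsto_const_nhds.congr'
      ((eventually_norm_det_pow_sub_one_eq hQ hΦQ hmod he hlim (h j hj)).mono
        fun k hk => congrArg (fun x : ℝ => ((x⁻¹ : ℝ) : ℂ)) hk.symm)⟩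

/-- If `Φ` is a `d×d` matrix over `ℤ_p` with `det(Φⁿ - Id) ≠ 0` for all `n ≥ 1`
whose reduction modulo `p` is not nilpotent, then the sequence of Reidemeister
numbers `u(n) = ‖det(Φⁿ - Id)‖⁻¹` satisfies no linear recurrence. -/
theorem reidemeister_sequence_not_linear_recurrence (p : ℕ) [Fact p.Prime]
    (d : ℕ) (hd : 1 ≤ d) (Φ : Matrix (Fin d) (Fin d) ℤ_[p])
    (h : ∀ n : ℕ, 1 ≤ n → (Φ ^ n - 1).det ≠ 0)
    (hnil : ¬ IsNilpotent (Φ.map (PadicInt.toZMod (p := p)))) :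
    ¬ ∃ (D : ℕ), 1 ≤ D ∧ ∃ c : Fin D → ℂ,
      ∀ n : ℕ, 1 ≤ n →
        ((‖(Φ ^ (n + D) - 1).det‖⁻¹ : ℝ) : ℂ) =
          ∑ i : Fin D, c i * ((‖(Φ ^ (n + (i : ℕ)) - 1).det‖⁻¹ : ℝ) : ℂ) :=
  reidemeister_sequence_not_linear_recurrence_general p d Φ h hnil
end

section
/- Let p be a prime, d ≥ 1, and Φ a d×d matrix over ℤ_p defining the endomorphism φ(x) = Φ·x of ℤ_p^d. If the reduction of Φ modulo p is a nilpotent matrix over 𝔽_p, then for every n ≥ 1 the matrix Φⁿ − Id is invertible over ℤ_p, the Reidemeister number R(φⁿ) equals 1, and consequently the Reidemeister zeta function satisfies R_φ(z) = exp(∑_{n≥1} zⁿ/n) = 1/(1 − z) for all complex z with |z| < 1. -/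
/-- If the reduction of `Φ` modulo `p` is nilpotent, then `Φⁿ - Id` is invertible
over `ℤ_p` for every `n ≥ 1`, all Reidemeister numbers `R(φⁿ)` equal `1`, and the
Reidemeister zeta function equals `1/(1-z)` on the open unit disk. -/
theorem reidemeister_zeta_rational_of_nilpotent_reduction (p : ℕ) [Fact p.Prime]
    (d : ℕ) (hd : 1 ≤ d) (Φ : Matrix (Fin d) (Fin d) ℤ_[p])
    (hnil : IsNilpotent (Φ.map (PadicInt.toZMod (p := p)))) :
    (∀ n : ℕ, 1 ≤ n → IsUnit (Φ ^ n - 1)) ∧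
    (∀ n : ℕ, 1 ≤ n →
      Nat.card (Quot (fun x y : Fin d → ℤ_[p] => ∃ b, y = x + b - (Φ ^ n).mulVec b)) = 1) ∧
    (∀ z : ℂ, ‖z‖ < 1 →
      Complex.exp (∑' n : ℕ,
        (Nat.card (Quot (fun x y : Fin d → ℤ_[p] =>
            ∃ b, y = x + b - (Φ ^ (n + 1)).mulVec b)) : ℂ) * z ^ (n + 1) / ((n : ℂ) + 1)) =
        1 / (1 - z)) := by
  -- Step 1: invertibility of Φ^n - 1
  have hu : ∀ n : ℕ, 1 ≤ n → IsUnit (Φ ^ n - 1) := by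
    intro n hn
    have hmap : (Φ ^ n - 1).map (PadicInt.toZMod (p := p)) =
        (Φ.map (PadicInt.toZMod (p := p))) ^ n - 1 := by
      have := (PadicInt.toZMod (p := p)).mapMatrix.map_sub (Φ ^ n) 1
      simpa [RingHom.mapMatrix_apply, map_pow] using this
    have hred : IsUnit ((Φ ^ n - 1).map (PadicInt.toZMod (p := p))) := by
      rw [hmap]
      exact (hnil.pow_of_pos (Nat.one_le_iff_ne_zero.mp hn)).isUnit_sub_one
    rw [Matrix.isUnit_iff_isUnit_det] at hred ⊢
    rw [← RingHom.mapMatrix_apply, ← RingHom.map_det] at hred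
    by_contra hdet
    have hmem : (Φ ^ n - 1).det ∈ IsLocalRing.maximalIdeal ℤ_[p] := hdet
    rw [← PadicInt.ker_toZMod, RingHom.mem_ker] at hmem
    exact hred.ne_zero hmem
  -- Step 2: Reidemeister numbers are 1
  have hone : ∀ n : ℕ, 1 ≤ n →
      Nat.card (Quot (fun x y : Fin d → ℤ_[p] => ∃ b, y = x + b - (Φ ^ n).mulVec b)) = 1 := by
    intro n hn
    rw [Nat.card_eq_one_iff_unique]
    constructor
    · constructor
      intro a b
      induction a using Quot.ind with | _ x =>
      induction b using Quot.ind with | _ y =>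
      apply Quot.sound
      have hA : IsUnit (1 - Φ ^ n) := by
        have := (hu n hn).neg
        rwa [neg_sub] at this
      have hAd : IsUnit (1 - Φ ^ n).det := (Matrix.isUnit_iff_isUnit_det _).mp hA
      refine ⟨(1 - Φ ^ n)⁻¹.mulVec (y - x), ?_⟩
      have key : (1 - Φ ^ n).mulVec ((1 - Φ ^ n)⁻¹.mulVec (y - x)) = y - x := by
        rw [Matrix.mulVec_mulVec, Matrix.mul_nonsing_inv _ hAd, Matrix.one_mulVec]
      have : (1 - Φ ^ n).mulVec ((1 - Φ ^ n)⁻¹.mulVec (y - x)) =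
          (1 : Matrix (Fin d) (Fin d) ℤ_[p]).mulVec ((1 - Φ ^ n)⁻¹.mulVec (y - x))
            - (Φ ^ n).mulVec ((1 - Φ ^ n)⁻¹.mulVec (y - x)) := by
        rw [Matrix.sub_mulVec]
      rw [this, Matrix.one_mulVec] at key
      rw [add_sub_assoc, key]
      abel
    · exact ⟨Quot.mk _ 0⟩
  refine ⟨hu, hone, ?_⟩
  -- Step 3: the zeta function
  intro z hz
  have hterm : ∀ n : ℕ,
      (Nat.card (Quot (fun x y : Fin d → ℤ_[p] =>
        ∃ b, y = x + b - (Φ ^ (n + 1)).mulVec b)) : ℂ) * z ^ (n + 1) / ((n : ℂ) + 1)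
        = z ^ (n + 1) / ((n : ℂ) + 1) := by
    intro n
    rw [hone (n + 1) (Nat.le_add_left 1 n)]
    push_cast
    ring
  have hlog := Complex.hasSum_taylorSeries_neg_log hz
  have hshift : HasSum (fun n : ℕ => z ^ (n + 1) / ((n : ℂ) + 1)) (-Complex.log (1 - z)) := by
    have h := (hasSum_nat_add_iff' (f := fun n : ℕ => z ^ n / (n : ℂ)) 1).mpr hlog
    simpa using h
  have hz1 : (1 : ℂ) - z ≠ 0 := by
    intro h
    have : z = 1 := by linear_combination -h
    rw [this] at hz
    simp at hz
  rw [tsum_congr hterm, hshift.tsum_eq, Complex.exp_neg, Complex.exp_log hz1, one_div]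
end

section
/- Let G be a group and φ, ψ : G → G two commuting automorphisms (φ∘ψ = ψ∘φ). Then for every n ≥ 1 the set of (φⁿ,ψⁿ)-conjugacy classes is in bijection with the set of (ψ⁻¹∘φ)ⁿ-conjugacy classes; in particular R(φⁿ,ψⁿ) = R((ψ⁻¹∘φ)ⁿ) for all n ≥ 1, and hence, when the pair (φ,ψ) is tame, the coincidence Reidemeister zeta function R_{φ,ψ}(z) equals the Reidemeister zeta function R_{ψ⁻¹∘φ}(z). -/
private def key_equiv {G : Type*} [Group G] (φ ψ : MulAut G)
    (hcomm : φ * ψ = ψ * φ) (n : ℕ) :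
    Quot (fun x y : G => ∃ g : G, y = (ψ ^ n) g * x * ((φ ^ n) g)⁻¹) ≃
      Quot (fun x y : G => ∃ g : G, y = g * x * (((ψ⁻¹ * φ) ^ n) g)⁻¹) := by
  have hc : Commute (ψ⁻¹) φ := Commute.inv_left hcomm.symm
  have hpow : (ψ⁻¹ * φ) ^ n = (ψ ^ n)⁻¹ * φ ^ n := by
    rw [hc.mul_pow, inv_pow]
  refine Quot.congr ((ψ ^ n)⁻¹ : MulAut G).toEquiv (fun x y => ?_)
  constructor
  · rintro ⟨g, rfl⟩
    refine ⟨g, ?_⟩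
    simp [MulEquiv.coe_toEquiv, hpow, MulAut.mul_apply, map_mul]
  · rintro ⟨g, hg⟩
    refine ⟨g, ((ψ ^ n)⁻¹ : MulAut G).injective ?_⟩
    rw [show ((ψ ^ n)⁻¹ : MulAut G) y = g * ((ψ ^ n)⁻¹ : MulAut G) x * (((ψ⁻¹ * φ) ^ n) g)⁻¹ from hg, hpow]
    simp [MulAut.mul_apply, map_mul]

/-- For commuting automorphisms `φ, ψ` of a group `G`, for every `n ≥ 1` the
`(φⁿ,ψⁿ)`-conjugacy classes are in bijection with the `(ψ⁻¹φ)ⁿ`-conjugacy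
classes, so `R(φⁿ,ψⁿ) = R((ψ⁻¹φ)ⁿ)`; hence when the pair `(φ,ψ)` is tame the
coincidence Reidemeister zeta function equals the Reidemeister zeta function of
`ψ⁻¹φ`. -/
theorem coincidence_zeta_eq_reidemeister_zeta {G : Type*} [Group G] (φ ψ : MulAut G)
    (hcomm : φ * ψ = ψ * φ) :
    (∀ n : ℕ, 1 ≤ n →
      Nonempty
        (Quot (fun x y : G => ∃ g : G, y = (ψ ^ n) g * x * ((φ ^ n) g)⁻¹) ≃
          Quot (fun x y : G => ∃ g : G, y = g * x * (((ψ⁻¹ * φ) ^ n) g)⁻¹))) ∧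
    (∀ n : ℕ, 1 ≤ n →
      Nat.card (Quot (fun x y : G => ∃ g : G, y = (ψ ^ n) g * x * ((φ ^ n) g)⁻¹)) =
        Nat.card (Quot (fun x y : G => ∃ g : G, y = g * x * (((ψ⁻¹ * φ) ^ n) g)⁻¹))) ∧
    ((∀ n : ℕ, 1 ≤ n →
        Finite (Quot (fun x y : G => ∃ g : G, y = (ψ ^ n) g * x * ((φ ^ n) g)⁻¹))) →
      ∀ z : ℂ,
        Complex.exp (∑' n : ℕ,
          (Nat.card (Quot (fun x y : G =>
              ∃ g : G, y = (ψ ^ (n + 1)) g * x * ((φ ^ (n + 1)) g)⁻¹)) : ℂ) *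
            z ^ (n + 1) / ((n : ℂ) + 1)) =
        Complex.exp (∑' n : ℕ,
          (Nat.card (Quot (fun x y : G =>
              ∃ g : G, y = g * x * (((ψ⁻¹ * φ) ^ (n + 1)) g)⁻¹)) : ℂ) *
            z ^ (n + 1) / ((n : ℂ) + 1))) := by
  refine ⟨fun n _ => ⟨key_equiv φ ψ hcomm n⟩,
    fun n _ => Nat.card_congr (key_equiv φ ψ hcomm n), fun _ z => ?_⟩
  congr 1
  exact tsum_congr fun n => by rw [Nat.card_congr (key_equiv φ ψ hcomm (n + 1))]
end

section
/- Let G be a group, N a normal subgroup of G contained in the center Z(G), and φ, ψ : G → G endomorphisms with φ(N) ⊆ N and ψ(N) ⊆ N. Let φ|_N, ψ|_N denote the restrictions to N and φ', ψ' the induced endomorphisms of G/N. If R(φ|_N, ψ|_N) < ∞ and R(φ', ψ') < ∞, then R(φ,ψ) ≤ R(φ|_N, ψ|_N) · R(φ', ψ'). -/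
private lemma twistedConj_equivalence {H : Type*} [Group H] (a b : H →* H) :
    Equivalence (fun x y : H => ∃ g : H, y = b g * x * (a g)⁻¹) := by
  constructor
  · intro x; exact ⟨1, by simp⟩
  · rintro x y ⟨g, rfl⟩
    exact ⟨g⁻¹, by simp [mul_assoc]⟩
  · rintro x y z ⟨g, rfl⟩ ⟨h, rfl⟩
    exact ⟨h * g, by simp [mul_assoc]⟩

/-- For a group `G`, a normal subgroup `N ≤ Z(G)` invariant under endomorphisms
`φ, ψ`, if the coincidence Reidemeister numbers of the restrictions to `N` and of
the induced endomorphisms of `G/N` are finite, then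
`R(φ,ψ) ≤ R(φ|_N, ψ|_N) · R(φ', ψ')`. -/
theorem reidemeister_coincidence_le_central {G : Type*} [Group G]
    (N : Subgroup G) [N.Normal] (hcentral : N ≤ Subgroup.center G)
    (φ ψ : G →* G) (hφ : N ≤ N.comap φ) (hψ : N ≤ N.comap ψ)
    (hfinN : Finite (Quot (fun x y : ↥N =>
      ∃ g : G, g ∈ N ∧ (y : G) = ψ g * (x : G) * (φ g)⁻¹)))
    (hfinQ : Finite (Quot (fun x y : G ⧸ N =>
      ∃ g : G ⧸ N, y = QuotientGroup.map N N ψ hψ g * x * (QuotientGroup.map N N φ hφ g)⁻¹))) :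
    Nat.card (Quot (fun x y : G => ∃ g : G, y = ψ g * x * (φ g)⁻¹)) ≤
      Nat.card (Quot (fun x y : ↥N =>
        ∃ g : G, g ∈ N ∧ (y : G) = ψ g * (x : G) * (φ g)⁻¹)) *
      Nat.card (Quot (fun x y : G ⧸ N =>
        ∃ g : G ⧸ N, y = QuotientGroup.map N N ψ hψ g * x *
          (QuotientGroup.map N N φ hφ g)⁻¹)) := by
  classical
  set rN : ↥N → ↥N → Prop := fun x y : ↥N =>
    ∃ g : G, g ∈ N ∧ (y : G) = ψ g * (x : G) * (φ g)⁻¹ with hrN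
  set rG : G → G → Prop := fun x y : G => ∃ g : G, y = ψ g * x * (φ g)⁻¹ with hrG
  set rQ : (G ⧸ N) → (G ⧸ N) → Prop := fun x y : G ⧸ N =>
    ∃ g : G ⧸ N, y = QuotientGroup.map N N ψ hψ g * x *
      (QuotientGroup.map N N φ hφ g)⁻¹ with hrQ
  have hequivQ : Equivalence rQ := twistedConj_equivalence _ _
  -- a representative in `G` for each class in the quotient Reidemeister set
  let rep : Quot rQ → G := fun c => (Quot.out c).out
  have hrep : ∀ c, (QuotientGroup.mk (rep c) : G ⧸ N) = Quot.out c := fun c =>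
    QuotientGroup.out_eq' _
  -- well-definedness of `n ↦ [rep c * n]`
  have key : ∀ (c : Quot rQ) (n m : ↥N), rN n m →
      Quot.mk rG (rep c * (n : G)) = Quot.mk rG (rep c * (m : G)) := by
    rintro c n m ⟨g, hg, hm⟩
    apply Quot.sound
    refine ⟨g, ?_⟩
    have hcen := Subgroup.mem_center_iff.mp (hcentral (hψ hg))
    rw [hm]
    simp only [← mul_assoc]
    rw [hcen (rep c)]
  let Φ : Quot rN × Quot rQ → Quot rG := fun p =>
    Quot.lift (fun n : ↥N => Quot.mk rG (rep p.2 * (n : G)))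
      (fun n m h => key p.2 n m h) p.1
  have hsurj : Function.Surjective Φ := by
    intro y
    induction y using Quot.ind with
    | _ x =>
      set c : Quot rQ := Quot.mk rQ (QuotientGroup.mk x : G ⧸ N) with hc
      have h1 : Quot.mk rQ (QuotientGroup.mk (rep c)) = c := by
        rw [hrep]; exact Quot.out_eq c
      have h2 : rQ (QuotientGroup.mk (rep c)) (QuotientGroup.mk x) :=
        hequivQ.eqvGen_iff.mp (Quot.eqvGen_exact h1)
      obtain ⟨gbar, hgbar⟩ := h2
      obtain ⟨g, rfl⟩ := QuotientGroup.mk_surjective gbar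
      rw [QuotientGroup.map_mk, QuotientGroup.map_mk] at hgbar
      have hmk : (QuotientGroup.mk (ψ g * rep c * (φ g)⁻¹) : G ⧸ N) = QuotientGroup.mk x := by
        rw [hgbar]; rfl
      have hn : (ψ g * rep c * (φ g)⁻¹)⁻¹ * x ∈ N := QuotientGroup.eq.mp hmk
      set n : G := (ψ g * rep c * (φ g)⁻¹)⁻¹ * x with hndef
      have hx : x = ψ g * rep c * (φ g)⁻¹ * n := by rw [hndef]; group
      have hcen := Subgroup.mem_center_iff.mp (hcentral hn)
      refine ⟨(Quot.mk rN ⟨n, hn⟩, c), ?_⟩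
      show Quot.mk rG (rep c * n) = Quot.mk rG x
      apply Quot.sound
      refine ⟨g, ?_⟩
      rw [hx, mul_assoc (ψ g * rep c), hcen ((φ g)⁻¹)]
      group
  haveI : Finite (Quot rN) := hfinN
  haveI : Finite (Quot rQ) := hfinQ
  calc Nat.card (Quot rG) ≤ Nat.card (Quot rN × Quot rQ) :=
        Nat.card_le_card_of_surjective Φ hsurj
    _ = Nat.card (Quot rN) * Nat.card (Quot rQ) := Nat.card_prod _ _
end

section
/- Let N be a finitely generated torsion-free nilpotent group and φ, ψ : N → N endomorphisms. Let N = N₁ ≥ N₂ ≥ … ≥ N_c ≥ N_{c+1} = 1 be the adapted lower central series of N, i.e. a chain of subgroups such that for each k: N_k is normal in N and invariant under both φ and ψ; the commutator satisfies [N, N_k] ≤ N_{k+1} (so N_k/N_{k+1} is central in N/N_{k+1}); and each factor G_k = N_k/N_{k+1} is a finitely generated torsion-free abelian group (so G_k ≅ ℤ^{d_k} for some d_k). Let φ_k, ψ_k denote the endomorphisms of G_k induced by φ, ψ. If R(φ,ψ) < ∞ and R(φ_k,ψ_k) < ∞ for all 1 ≤ k ≤ c, then R(φ,ψ) = ∏_{k=1}^{c}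 R(φ_k,ψ_k). -/
/-!
Let `1 → B → H → Q → 1` be a central extension compatible with `φ` and `ψ` such that the twisted
action `g • x = ψ g * x * (φ g)⁻¹` of `Q` on itself is free. Over the Reidemeister class of the
image of `x`, the map `b ↦ [x * b]` is a bijection from the Reidemeister classes of `B` onto the
fibre: centrality makes it well defined, and freeness on `Q` forces any element conjugating
`x * b` to `x * b'` to lie in `B`. Hence `R(H) = R(Q) · R(B)`, and if `ψ_B / φ_B` has trivial
kernel, the twisted action on `H` is free again. On a factor `ℤ^d` the Reidemeister classes
surject onto `ℤ^d / range (ψₖ - φₖ)`, so finiteness of `R(φₖ, ψₖ)` forces `ψₖ - φₖ` to be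
injective by rank–nullity. Running the extension step along
`1 → N_j / N_{j+1} → G / N_{j+1} → G / N_j → 1` for `j = 1, …, c` gives the product formula.
-/

open Function

section TwistedConjugacy

variable {G H : Type*} [Group G] [Group H]

/-- `Quot (TwistedConj φ ψ)` is the set of Reidemeister classes, so `R(φ, ψ)` is its `Nat.card`. -/
def TwistedConj (φ ψ : G →* G) (x y : G) : Prop :=
  ∃ g, y = ψ g * x * (φ g)⁻¹

def TwistedActionFree (φ ψ : G →* G) : Prop :=
  ∀ g x, ψ g * x * (φ g)⁻¹ = x → g = 1

theorem TwistedConj.equivalence (φ ψ : G →* G) : Equivalence (TwistedConj φ ψ) where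
  refl x := ⟨1, by simp⟩
  symm := by
    rintro x y ⟨g, rfl⟩
    exact ⟨g⁻¹, by simp [mul_assoc]⟩
  trans := by
    rintro x y z ⟨g, rfl⟩ ⟨h, rfl⟩
    exact ⟨h * g, by simp [mul_assoc]⟩

theorem TwistedConj.quot_mk_eq_iff {φ ψ : G →* G} {x y : G} :
    Quot.mk (TwistedConj φ ψ) x = Quot.mk _ y ↔ TwistedConj φ ψ x y :=
  (TwistedConj.equivalence φ ψ).quot_mk_eq_iff x y

theorem TwistedConj.map {φ ψ : G →* G} {φH ψH : H →* H} {f : G →* H}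
    (hφ : Semiconj f φ φH) (hψ : Semiconj f ψ ψH) {x y : G} (h : TwistedConj φ ψ x y) :
    TwistedConj φH ψH (f x) (f y) := by
  obtain ⟨g, rfl⟩ := h
  exact ⟨f g, by simp [hφ g, hψ g]⟩

def TwistedConj.quotMap {φ ψ : G →* G} {φH ψH : H →* H} {f : G →* H}
    (hφ : Semiconj f φ φH) (hψ : Semiconj f ψ ψH) :
    Quot (TwistedConj φ ψ) → Quot (TwistedConj φH ψH) :=
  Quot.map f fun _ _ => TwistedConj.map hφ hψ

def TwistedConj.quotCongr {φ ψ : G →* G} {φH ψH : H →* H} (e : G ≃* H)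
    (hφ : Semiconj e φ φH) (hψ : Semiconj e ψ ψH) :
    Quot (TwistedConj φ ψ) ≃ Quot (TwistedConj φH ψH) :=
  Quot.congr e.toEquiv fun x y => by
    refine ⟨TwistedConj.map (f := e.toMonoidHom) hφ hψ, fun h => ?_⟩
    simpa using TwistedConj.map (f := e.symm.toMonoidHom)
      (hφ.inverse_left e.left_inv e.right_inv) (hψ.inverse_left e.left_inv e.right_inv) h

end TwistedConjugacy

namespace GroupExtension

variable {B H Q : Type*} [Group B] [Group H] [Group Q] (S : GroupExtension B H Q)

structure IsEquivariant (fB : B →* B) (f : H →* H) (fQ : Q →* Q) : Prop where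
  inl : Semiconj S.inl fB f
  rightHom : Semiconj S.rightHom f fQ

def IsCentral : Prop := ∀ b h, Commute (S.inl b) h

variable {S} {φB ψB : B →* B} {φ ψ : H →* H} {φQ ψQ : Q →* Q}

theorem twistedConj_mul_inl (hφ : S.IsEquivariant φB φ φQ) (hψ : S.IsEquivariant ψB ψ ψQ)
    (hS : S.IsCentral) (x : H) {a b : B} (hab : TwistedConj φB ψB a b) :
    TwistedConj φ ψ (x * S.inl a) (x * S.inl b) := by
  obtain ⟨g, rfl⟩ := hab
  refine ⟨S.inl g, ?_⟩
  rw [← hφ.inl, ← hψ.inl, map_mul, map_mul, map_inv]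
  simp only [mul_assoc]
  exact ((hS _ x).left_comm _).symm

theorem twistedConj_of_mul_inl (hφ : S.IsEquivariant φB φ φQ) (hψ : S.IsEquivariant ψB ψ ψQ)
    (hS : S.IsCentral) (hQ : TwistedActionFree φQ ψQ) (x : H) {a b : B}
    (h : TwistedConj φ ψ (x * S.inl a) (x * S.inl b)) : TwistedConj φB ψB a b := by
  obtain ⟨g, hg⟩ := h
  have hg_ker : S.rightHom g = 1 := by
    refine hQ _ (S.rightHom x) ?_
    simpa [← hφ.rightHom g, ← hψ.rightHom g] using (congrArg S.rightHom hg).symm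
  obtain ⟨t, rfl⟩ : g ∈ S.inl.range := S.range_inl_eq_ker_rightHom ▸ hg_ker
  refine ⟨t, S.inl_injective ?_⟩
  rw [map_mul, map_mul, map_inv, hφ.inl, hψ.inl]
  apply mul_left_cancel (a := x)
  rw [hg, ← hψ.inl]
  simp only [mul_assoc]
  exact (hS _ x).left_comm _

theorem exists_twistedConj_mul_inl (hφ : S.IsEquivariant φB φ φQ) (hψ : S.IsEquivariant ψB ψ ψQ)
    (hS : S.IsCentral) {x y : H} (h : TwistedConj φQ ψQ (S.rightHom x) (S.rightHom y)) :
    ∃ b, TwistedConj φ ψ (x * S.inl b) y := by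
  obtain ⟨q, hq⟩ := h
  obtain ⟨g, rfl⟩ := S.rightHom_surjective q
  obtain ⟨b, hb⟩ : (ψ g * x * (φ g)⁻¹)⁻¹ * y ∈ S.inl.range := by
    rw [S.range_inl_eq_ker_rightHom, MonoidHom.mem_ker]
    simp only [map_mul, map_inv, hq, hφ.rightHom g, hψ.rightHom g]
    group
  refine ⟨b, g, ?_⟩
  rw [← mul_assoc, mul_assoc _ (S.inl b), (hS b _).eq, ← mul_assoc, hb]
  group

theorem twistedActionFree (hφ : S.IsEquivariant φB φ φQ) (hψ : S.IsEquivariant ψB ψ ψQ)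
    (hS : S.IsCentral) (hB : ∀ b, ψB b = φB b → b = 1) (hQ : TwistedActionFree φQ ψQ) :
    TwistedActionFree φ ψ := by
  intro g x h
  have hg_ker : S.rightHom g = 1 :=
    hQ _ (S.rightHom x) (by simpa [← hφ.rightHom g, ← hψ.rightHom g] using congrArg S.rightHom h)
  obtain ⟨b, rfl⟩ : g ∈ S.inl.range := S.range_inl_eq_ker_rightHom ▸ hg_ker
  rw [hB b ?_, map_one]
  apply S.inl_injective
  rwa [← hφ.inl, ← hψ.inl, (hS _ x).eq, mul_assoc, mul_eq_left, mul_inv_eq_one] at h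

theorem nonempty_quotMap_fiber_equiv (hφ : S.IsEquivariant φB φ φQ) (hψ : S.IsEquivariant ψB ψ ψQ)
    (hS : S.IsCentral) (hQ : TwistedActionFree φQ ψQ) (u : Quot (TwistedConj φQ ψQ)) :
    Nonempty ({c // TwistedConj.quotMap hφ.rightHom hψ.rightHom c = u} ≃
      Quot (TwistedConj φB ψB)) := by
  obtain ⟨x, rfl⟩ : ∃ x, Quot.mk _ (S.rightHom x) = u := by
    obtain ⟨q, rfl⟩ := Quot.exists_rep u
    obtain ⟨x, rfl⟩ := S.rightHom_surjective q
    exact ⟨x, rfl⟩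
  let F : Quot (TwistedConj φB ψB) →
      {c // TwistedConj.quotMap hφ.rightHom hψ.rightHom c = Quot.mk _ (S.rightHom x)} :=
    Quot.lift (fun b => ⟨Quot.mk _ (x * S.inl b),
        congrArg (Quot.mk _) (by rw [map_mul, S.rightHom_inl, mul_one])⟩)
      fun a b h => Subtype.ext (Quot.sound (twistedConj_mul_inl hφ hψ hS x h))
  refine ⟨(Equiv.ofBijective F ⟨?_, ?_⟩).symm⟩
  · rintro ⟨a⟩ ⟨b⟩ hab
    exact Quot.sound <| twistedConj_of_mul_inl hφ hψ hS hQ x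
      (TwistedConj.quot_mk_eq_iff.1 (congrArg Subtype.val hab))
  · rintro ⟨⟨y⟩, hy⟩
    obtain ⟨b, hb⟩ := exists_twistedConj_mul_inl hφ hψ hS
      (TwistedConj.quot_mk_eq_iff.1 hy.symm)
    exact ⟨Quot.mk _ b, Subtype.ext (Quot.sound hb)⟩

theorem card_twistedClasses (hφ : S.IsEquivariant φB φ φQ) (hψ : S.IsEquivariant ψB ψ ψQ)
    (hS : S.IsCentral) (hQ : TwistedActionFree φQ ψQ) :
    Nat.card (Quot (TwistedConj φ ψ)) =
      Nat.card (Quot (TwistedConj φQ ψQ)) * Nat.card (Quot (TwistedConj φB ψB)) := by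
  let fibers u := (nonempty_quotMap_fiber_equiv hφ hψ hS hQ u).some
  rw [← Nat.card_prod, ← Nat.card_congr (Equiv.sigmaEquivProdOfEquiv fibers),
    Nat.card_congr (Equiv.sigmaFiberEquiv _)]

end GroupExtension

theorem AddMonoidHom.injective_of_finiteIndex_range {M : Type*} [AddCommGroup M]
    [Module.Finite ℤ M] [Module.IsTorsionFree ℤ M] (f : M →+ M) [f.range.FiniteIndex] :
    Injective f := by
  have hdisj := Submodule.disjoint_ker_of_finrank_le (L := ⊤) f.toIntLinearMap <| by
    rw [Submodule.map_top, finrank_top]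
    exact (AddSubgroup.finrank_eq_of_finiteIndex f.range).ge
  rwa [top_disjoint, LinearMap.ker_eq_bot] at hdisj

theorem eq_one_of_finite_twistedClasses {M : Type*} [AddCommGroup M]
    [Module.Finite ℤ M] [Module.IsTorsionFree ℤ M] {φ ψ : Multiplicative M →* Multiplicative M}
    [Finite (Quot (TwistedConj φ ψ))] {u : Multiplicative M} (hu : ψ u = φ u) : u = 1 := by
  let δ : M →+ M := AddMonoidHom.toMultiplicative.symm ψ - AddMonoidHom.toMultiplicative.symm φ
  have hδ (x : Multiplicative M) : δ x.toAdd = (ψ x).toAdd - (φ x).toAdd := rfl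
  let proj : Quot (TwistedConj φ ψ) → M ⧸ δ.range :=
    Quot.lift (fun x => (x.toAdd : M ⧸ δ.range)) <| by
      rintro x _ ⟨g, rfl⟩
      refine QuotientAddGroup.eq.2 ⟨g.toAdd, ?_⟩
      simp only [hδ, toAdd_mul, toAdd_inv]
      abel
  have : Finite (M ⧸ δ.range) := Finite.of_surjective proj fun q =>
    QuotientAddGroup.induction_on q fun m => ⟨Quot.mk _ (.ofAdd m), rfl⟩
  have : δ.range.FiniteIndex := AddSubgroup.finiteIndex_of_finite_quotient
  have hδu : δ u.toAdd = 0 := by rw [hδ, hu, sub_self]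
  exact δ.injective_of_finiteIndex_range (hδu.trans δ.map_zero.symm)

theorem eq_one_of_finite_twistedClasses_of_mulEquiv {B M : Type*} [Group B] [AddCommGroup M]
    [Module.Finite ℤ M] [Module.IsTorsionFree ℤ M] (e : B ≃* Multiplicative M) {φ ψ : B →* B}
    [Finite (Quot (TwistedConj φ ψ))] {u : B} (hu : ψ u = φ u) : u = 1 := by
  let conj (χ : B →* B) : Multiplicative M →* Multiplicative M :=
    (e.toMonoidHom.comp χ).comp e.symm.toMonoidHom
  have hconj (χ : B →* B) : Semiconj e χ (conj χ) := fun x => by simp [conj]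
  have : Finite (Quot (TwistedConj (conj φ) (conj ψ))) :=
    Finite.of_equiv _ (TwistedConj.quotCongr e (hconj φ) (hconj ψ))
  have heu : e u = 1 := eq_one_of_finite_twistedClasses (φ := conj φ) (ψ := conj ψ)
    (by rw [← hconj φ u, ← hconj ψ u, hu])
  exact e.map_eq_one_iff.1 heu

namespace QuotientGroup

variable {G : Type*} [Group G] {K M : Subgroup G} [K.Normal] [M.Normal]

def factorExtension (hMK : M ≤ K) : GroupExtension (K ⧸ M.subgroupOf K) (G ⧸ M) (G ⧸ K) where
  inl := map (M.subgroupOf K) M K.subtype fun _ hx => hx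
  rightHom := map M K (MonoidHom.id G) hMK
  inl_injective := by
    rw [← MonoidHom.ker_eq_bot_iff, eq_bot_iff]
    intro q hq
    induction q using QuotientGroup.induction_on with | _ x
    exact (eq_one_iff x).2 ((eq_one_iff (x : G)).1 hq)
  range_inl_eq_ker_rightHom := by
    ext q
    induction q using QuotientGroup.induction_on with | _ x
    refine ⟨?_, fun hx => ⟨(⟨x, (eq_one_iff x).1 hx⟩ : K), rfl⟩⟩
    rintro ⟨y, hy⟩
    induction y using QuotientGroup.induction_on with | _ y
    rw [← hy]
    exact (eq_one_iff (y : G)).2 y.2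
  rightHom_surjective := map_surjective_of_surjective _ _ _ mk_surjective _

theorem factorExtension_isCentral (hMK : M ≤ K) (hKM : ⁅(⊤ : Subgroup G), K⁆ ≤ M) :
    (factorExtension hMK).IsCentral := by
  intro b h
  induction b using QuotientGroup.induction_on with | _ k
  induction h using QuotientGroup.induction_on with | _ g
  refine QuotientGroup.eq.2 ?_
  have := hKM (Subgroup.commutator_mem_commutator (Subgroup.mem_top g⁻¹) (inv_mem k.2))
  simpa [commutatorElement_def, mul_assoc] using this

theorem factorExtension_isEquivariant (hMK : M ≤ K) {φ : G →* G} (hK : K ≤ K.comap φ)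
    (hM : M ≤ M.comap φ) {φ' : K ⧸ M.subgroupOf K →* K ⧸ M.subgroupOf K}
    (hφ' : ∀ x : K, φ' x = (⟨φ x, hK x.2⟩ : K)) :
    (factorExtension hMK).IsEquivariant φ' (map M M φ hM) (map K K φ hK) where
  inl b := by
    induction b using QuotientGroup.induction_on with | _ k
    rw [hφ']
    rfl
  rightHom h := by
    induction h using QuotientGroup.induction_on with | _ g
    rfl

end QuotientGroup

theorem card_twistedClasses_quotient_eq_prod {G : Type*} [Group G] {φ ψ : G →* G}
    {N : ℕ → Subgroup G} [∀ k, (N k).Normal] (hN1 : N 1 = ⊤) (hdesc : ∀ k, N (k + 1) ≤ N k)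
    (hφN : ∀ k, N k ≤ (N k).comap φ) (hψN : ∀ k, N k ≤ (N k).comap ψ)
    (hcentral : ∀ k, ⁅(⊤ : Subgroup G), N k⁆ ≤ N (k + 1))
    {φ' ψ' : (k : ℕ) →
      (↥(N k) ⧸ (N (k + 1)).subgroupOf (N k)) →* (↥(N k) ⧸ (N (k + 1)).subgroupOf (N k))}
    (hφ' : ∀ k (x : N k), φ' k x = (⟨φ x, hφN k x.2⟩ : N k))
    (hψ' : ∀ k (x : N k), ψ' k x = (⟨ψ x, hψN k x.2⟩ : N k))
    {j : ℕ} (hj : 1 ≤ j) (hcoin : ∀ k ∈ Finset.Ico 1 j, ∀ u, ψ' k u = φ' k u → u = 1) :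
    Nat.card (Quot (TwistedConj (QuotientGroup.map _ _ φ (hφN j))
        (QuotientGroup.map _ _ ψ (hψN j)))) =
      ∏ k ∈ Finset.Ico 1 j, Nat.card (Quot (TwistedConj (φ' k) (ψ' k))) ∧
    TwistedActionFree (QuotientGroup.map _ _ φ (hφN j)) (QuotientGroup.map _ _ ψ (hψN j)) := by
  induction j, hj using Nat.le_induction with
  | base =>
    have : Subsingleton (G ⧸ N 1) := hN1 ▸ QuotientGroup.subsingleton_quotient_top
    refine ⟨?_, fun _ _ _ => Subsingleton.elim _ _⟩
    rw [Finset.Ico_self, Finset.prod_empty, Nat.card_eq_one_iff_unique]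
    exact ⟨inferInstance, ⟨Quot.mk _ 1⟩⟩
  | succ j hj ih =>
    obtain ⟨hcard, hfree⟩ := ih fun k hk => hcoin k (Finset.Ico_subset_Ico_right j.le_succ hk)
    have hcoin_j := hcoin j (Finset.mem_Ico.2 ⟨hj, j.lt_succ_self⟩)
    let S := QuotientGroup.factorExtension (hdesc j)
    have hφS := QuotientGroup.factorExtension_isEquivariant (hdesc j) (hφN j) (hφN (j + 1)) (hφ' j)
    have hψS := QuotientGroup.factorExtension_isEquivariant (hdesc j) (hψN j) (hψN (j + 1)) (hψ' j)
    have hS := QuotientGroup.factorExtension_isCentral (hdesc j) (hcentral j)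
    refine ⟨?_, S.twistedActionFree hφS hψS hS hcoin_j hfree⟩
    rw [S.card_twistedClasses hφS hψS hS hfree, hcard, Finset.prod_Ico_succ_top hj]

theorem reidemeister_coincidence_product_formula_general
    {G : Type*} [Group G]
    (φ ψ : G →* G) (c : ℕ)
    (N : ℕ → Subgroup G) [hnorm : ∀ k, (N k).Normal]
    (hN1 : N 1 = ⊤) (hNtop : N (c + 1) = ⊥)
    (hdesc : ∀ k, N (k + 1) ≤ N k)
    (hφinv : ∀ k, ∀ g ∈ N k, φ g ∈ N k) (hψinv : ∀ k, ∀ g ∈ N k, ψ g ∈ N k)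
    (hcentral : ∀ k, ⁅(⊤ : Subgroup G), N k⁆ ≤ N (k + 1))
    (hfactors : ∀ k, 1 ≤ k → k ≤ c → ∃ d : ℕ,
      Nonempty ((↥(N k) ⧸ (N (k + 1)).subgroupOf (N k)) ≃*
        Multiplicative (Fin d → ℤ)))
    (φ' ψ' : (k : ℕ) →
      (↥(N k) ⧸ (N (k + 1)).subgroupOf (N k)) →* (↥(N k) ⧸ (N (k + 1)).subgroupOf (N k)))
    (hφ' : ∀ k (x : ↥(N k)),
      φ' k (QuotientGroup.mk x) =
        QuotientGroup.mk (⟨φ (x : G), hφinv k (x : G) x.2⟩ : ↥(N k)))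
    (hψ' : ∀ k (x : ↥(N k)),
      ψ' k (QuotientGroup.mk x) =
        QuotientGroup.mk (⟨ψ (x : G), hψinv k (x : G) x.2⟩ : ↥(N k)))
    (hfink : ∀ k, 1 ≤ k → k ≤ c →
      Finite (Quot (fun x y : ↥(N k) ⧸ (N (k + 1)).subgroupOf (N k) =>
        ∃ g, y = ψ' k g * x * (φ' k g)⁻¹))) :
    Nat.card (Quot (fun x y : G => ∃ g : G, y = ψ g * x * (φ g)⁻¹)) =
      ∏ k ∈ Finset.Icc 1 c,
        Nat.card (Quot (fun x y : ↥(N k) ⧸ (N (k + 1)).subgroupOf (N k) =>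
          ∃ g, y = ψ' k g * x * (φ' k g)⁻¹)) := by
  have hcoin : ∀ k ∈ Finset.Ico 1 (c + 1), ∀ u, ψ' k u = φ' k u → u = 1 := by
    intro k hk u hu
    obtain ⟨hk1, hkc⟩ : 1 ≤ k ∧ k ≤ c := by simpa [Nat.lt_succ_iff] using hk
    obtain ⟨d, ⟨e⟩⟩ := hfactors k hk1 hkc
    have : Finite (Quot (TwistedConj (φ' k) (ψ' k))) := hfink k hk1 hkc
    exact eq_one_of_finite_twistedClasses_of_mulEquiv e hu
  obtain ⟨hcard, -⟩ := card_twistedClasses_quotient_eq_prod hN1 hdesc hφinv hψinv hcentral hφ' hψ'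
    (Nat.le_add_left 1 c) hcoin
  have hmk : Bijective (QuotientGroup.mk' (N (c + 1))) :=
    ⟨(MonoidHom.ker_eq_bot_iff _).1 (by rw [QuotientGroup.ker_mk', hNtop]),
      QuotientGroup.mk'_surjective _⟩
  rw [← Finset.Ico_add_one_right_eq_Icc]
  exact (Nat.card_congr (TwistedConj.quotCongr (MulEquiv.ofBijective _ hmk) (fun _ => rfl)
    fun _ => rfl)).trans hcard

/-- Product formula: let `G` be a finitely generated torsion-free nilpotent group
with endomorphisms `φ, ψ`, and let `G = N 1 ≥ N 2 ≥ … ≥ N c ≥ N (c+1) = 1` be the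
adapted lower central series: each `N k` is normal and `φ`- and `ψ`-invariant,
`[G, N k] ≤ N (k+1)`, and each factor `N k / N (k+1)` is finitely generated
torsion-free abelian (≅ `ℤ^{d_k}`). Let `φₖ, ψₖ` be the endomorphisms induced on
the factors. If `R(φ,ψ) < ∞` and every `R(φₖ,ψₖ) < ∞`, then
`R(φ,ψ) = ∏_{k=1}^{c} R(φₖ,ψₖ)`. -/
theorem reidemeister_coincidence_product_formula
    {G : Type*} [Group G]
    (hFG : Group.FG G) (htf : ∀ g : G, g ≠ 1 → ¬IsOfFinOrder g) (hnilp : Group.IsNilpotent G)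
    (φ ψ : G →* G) (c : ℕ) (hc : 1 ≤ c)
    (N : ℕ → Subgroup G) [hnorm : ∀ k, (N k).Normal]
    (hN1 : N 1 = ⊤) (hNtop : N (c + 1) = ⊥)
    (hdesc : ∀ k, N (k + 1) ≤ N k)
    (hφinv : ∀ k, ∀ g ∈ N k, φ g ∈ N k) (hψinv : ∀ k, ∀ g ∈ N k, ψ g ∈ N k)
    (hcentral : ∀ k, ⁅(⊤ : Subgroup G), N k⁆ ≤ N (k + 1))
    (hfactors : ∀ k, 1 ≤ k → k ≤ c → ∃ d : ℕ,
      Nonempty ((↥(N k) ⧸ (N (k + 1)).subgroupOf (N k)) ≃*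
        Multiplicative (Fin d → ℤ)))
    (φ' ψ' : (k : ℕ) →
      (↥(N k) ⧸ (N (k + 1)).subgroupOf (N k)) →* (↥(N k) ⧸ (N (k + 1)).subgroupOf (N k)))
    (hφ' : ∀ k (x : ↥(N k)),
      φ' k (QuotientGroup.mk x) =
        QuotientGroup.mk (⟨φ (x : G), hφinv k (x : G) x.2⟩ : ↥(N k)))
    (hψ' : ∀ k (x : ↥(N k)),
      ψ' k (QuotientGroup.mk x) =
        QuotientGroup.mk (⟨ψ (x : G), hψinv k (x : G) x.2⟩ : ↥(N k)))
    (hfin : Finite (Quot (fun x y : G => ∃ g : G, y = ψ g * x * (φ g)⁻¹)))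
    (hfink : ∀ k, 1 ≤ k → k ≤ c →
      Finite (Quot (fun x y : ↥(N k) ⧸ (N (k + 1)).subgroupOf (N k) =>
        ∃ g, y = ψ' k g * x * (φ' k g)⁻¹))) :
    Nat.card (Quot (fun x y : G => ∃ g : G, y = ψ g * x * (φ g)⁻¹)) =
      ∏ k ∈ Finset.Icc 1 c,
        Nat.card (Quot (fun x y : ↥(N k) ⧸ (N (k + 1)).subgroupOf (N k) =>
          ∃ g, y = ψ' k g * x * (φ' k g)⁻¹)) :=
  reidemeister_coincidence_product_formula_general φ ψ c N (hnorm := hnorm) hN1 hNtop hdesc hφinv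
    hψinv hcentral hfactors φ' ψ' hφ' hψ' hfink
end

section
/- Let d_φ, d_ψ be integers and let φ, ψ : ℤ → ℤ be the endomorphisms φ(x) = d_φ·x, ψ(x) = d_ψ·x. Then: (i) for every n ≥ 1, if d_φⁿ ≠ d_ψⁿ then R(φⁿ,ψⁿ) = |d_ψⁿ − d_φⁿ|, while if d_φⁿ = d_ψⁿ then the set of (φⁿ,ψⁿ)-conjugacy classes is infinite; (ii) the pair (φ,ψ) is tame if and only if |d_φ| ≠ |d_ψ|, and in that case, setting d₁ = max(|d_φ|, |d_ψ|) and d₂ = d_φ·d_ψ/d₁ (an integer), the coincidence Reidemeister zeta function satisfies R_{φ,ψ}(z) = exp( ∑_{n≥1} |d_ψⁿ − d_φⁿ| · zⁿ / n ) = (1 − d₂·z)/(1 − d₁·z) for all complex z with |z| < 1/d₁. -/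
lemma quot_card_aux (c d : ℤ) :
    Nat.card (Quot (fun x y : ℤ => ∃ g : ℤ, y = x + d * g - c * g)) = (d - c).natAbs := by
  set n : ℕ := (d - c).natAbs with hn
  have hmn : (n : ℤ) ∣ d - c := Int.natAbs_dvd.mpr dvd_rfl
  have hcast : ((d : ZMod n) - c) = 0 := by
    have : (((d - c : ℤ)) : ZMod n) = 0 := by
      rw [ZMod.intCast_zmod_eq_zero_iff_dvd]; exact hmn
    push_cast at this; linear_combination this
  have hsound : ∀ x y : ℤ, (∃ g : ℤ, y = x + d * g - c * g) → ((x : ZMod n) = (y : ZMod n)) := by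
    rintro x y ⟨g, rfl⟩
    push_cast
    linear_combination (-(g : ZMod n)) * hcast
  have hinj : Function.Injective
      (Quot.lift (fun x : ℤ => (x : ZMod n)) hsound) := by
    rintro ⟨x⟩ ⟨y⟩ hxy
    change (x : ZMod n) = (y : ZMod n) at hxy
    rw [ZMod.intCast_eq_intCast_iff] at hxy
    have hd : (d - c) ∣ y - x := Int.natAbs_dvd.mp hxy.dvd
    obtain ⟨g, hg⟩ := hd
    exact Quot.sound ⟨g, by linear_combination hg⟩
  have hsurj : Function.Surjective
      (Quot.lift (fun x : ℤ => (x : ZMod n)) hsound) := by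
    intro z
    obtain ⟨x, hx⟩ := ZMod.intCast_surjective (n := n) z
    exact ⟨Quot.mk _ x, hx⟩
  rw [Nat.card_congr (Equiv.ofBijective _ ⟨hinj, hsurj⟩), Nat.card_zmod]

lemma quot_infinite_aux (c d : ℤ) (h : c = d) :
    Infinite (Quot (fun x y : ℤ => ∃ g : ℤ, y = x + d * g - c * g)) := by
  subst h
  have hs : ∀ x y : ℤ, (∃ g : ℤ, y = x + c * g - c * g) → id x = id y := by
    rintro x y ⟨g, rfl⟩; simp
  apply Infinite.of_injective
    (fun x : ℤ => Quot.mk (fun x y : ℤ => ∃ g : ℤ, y = x + c * g - c * g) x)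
  intro x y hxy
  have := congrArg (Quot.lift (id : ℤ → ℤ) hs) hxy
  simpa using this

lemma key_abs (A B : ℤ) (h : |A| < |B|) (n : ℕ) (hn : 1 ≤ n) :
    ((B ^ n - A ^ n).natAbs : ℤ) = |B| ^ n - (A * B / |B|) ^ n := by
  have hB : B ≠ 0 := by
    intro hB0; rw [hB0, abs_zero] at h; exact absurd h (abs_nonneg A).not_gt
  have hpow : |A ^ n| < |B ^ n| := by
    rw [abs_pow, abs_pow]; exact pow_lt_pow_left₀ h (abs_nonneg A) (by omega)
  have hA1 : A ^ n ≤ |A ^ n| := le_abs_self _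
  have hA2 : -|A ^ n| ≤ A ^ n := neg_abs_le _
  rw [← Int.abs_eq_natAbs]
  rcases lt_or_gt_of_ne hB with hneg | hpos
  · have hdiv : A * B / |B| = -A := by
      rw [abs_of_neg hneg, Int.ediv_neg, Int.mul_ediv_cancel _ hB]
    rw [hdiv, abs_of_neg hneg]
    rcases Nat.even_or_odd n with he | ho
    · rw [he.neg_pow, he.neg_pow]
      have hBn : B ^ n = |B ^ n| := (abs_of_nonneg (he.pow_nonneg B)).symm
      rw [abs_of_nonneg (by linarith)]
    · rw [ho.neg_pow, ho.neg_pow]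
      have hBn : |B ^ n| = -(B ^ n) := abs_of_neg (ho.pow_neg hneg)
      rw [abs_of_nonpos (by linarith)]
      ring
  · have hdiv : A * B / |B| = A := by
      rw [abs_of_pos hpos, Int.mul_ediv_cancel _ hB]
    rw [hdiv, abs_of_pos hpos]
    have hBn : B ^ n = |B ^ n| := (abs_of_nonneg (pow_nonneg hpos.le n)).symm
    rw [abs_of_nonneg (by linarith)]

lemma zeta_aux (A B : ℤ) (h : |A| < |B|) (z : ℂ)
    (hz : ‖z‖ < 1 / ((|B| : ℤ) : ℝ)) :
    Complex.exp (∑' n : ℕ,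
      ((B ^ (n + 1) - A ^ (n + 1)).natAbs : ℂ) * z ^ (n + 1) / ((n : ℂ) + 1)) =
    (1 - ((A * B / |B| : ℤ) : ℂ) * z) / (1 - ((|B| : ℤ) : ℂ) * z) := by
  have hB : B ≠ 0 := by
    intro hB0; rw [hB0, abs_zero] at h; exact absurd h (abs_nonneg A).not_gt
  have hCabs : abs (A * B / |B|) = |A| := by
    rcases lt_or_gt_of_ne hB with hneg | hpos
    · rw [abs_of_neg hneg, Int.ediv_neg, Int.mul_ediv_cancel _ hB, abs_neg]
    · rw [abs_of_pos hpos, Int.mul_ediv_cancel _ hB]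
  have hBpos : (0 : ℝ) < ((|B| : ℤ) : ℝ) := by
    have : (0 : ℤ) < |B| := lt_of_le_of_lt (abs_nonneg A) h
    exact_mod_cast this
  set w1 : ℂ := ((|B| : ℤ) : ℂ) * z with hw1def
  set w2 : ℂ := ((A * B / |B| : ℤ) : ℂ) * z with hw2def
  have hnw1 : ‖w1‖ < 1 := by
    rw [hw1def, norm_mul, Complex.norm_intCast,
      abs_of_nonneg (by exact_mod_cast abs_nonneg B : (0:ℝ) ≤ ((|B| : ℤ) : ℝ))]
    calc ((|B| : ℤ) : ℝ) * ‖z‖ < ((|B| : ℤ) : ℝ) * (1 / ((|B| : ℤ) : ℝ)) :=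
          mul_lt_mul_of_pos_left hz hBpos
      _ = 1 := by field_simp
  have hnw2 : ‖w2‖ ≤ ‖w1‖ := by
    rw [hw1def, hw2def, norm_mul, norm_mul]
    apply mul_le_mul_of_nonneg_right _ (norm_nonneg z)
    rw [Complex.norm_intCast, Complex.norm_intCast, ← Int.cast_abs, ← Int.cast_abs, abs_abs]
    have : abs (A * B / |B|) ≤ |B| := by rw [hCabs]; exact h.le
    exact_mod_cast this
  have hnw2' : ‖w2‖ < 1 := lt_of_le_of_lt hnw2 hnw1
  have h1 := Complex.hasSum_taylorSeries_neg_log hnw1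
  have h2 := Complex.hasSum_taylorSeries_neg_log hnw2'
  have h1' : HasSum (fun n : ℕ => w1 ^ (n + 1) / ((n + 1 : ℕ) : ℂ)) (-Complex.log (1 - w1)) := by
    apply (hasSum_nat_add_iff (f := fun n : ℕ => w1 ^ n / (n : ℂ)) 1).mpr
    simpa using h1
  have h2' : HasSum (fun n : ℕ => w2 ^ (n + 1) / ((n + 1 : ℕ) : ℂ)) (-Complex.log (1 - w2)) := by
    apply (hasSum_nat_add_iff (f := fun n : ℕ => w2 ^ n / (n : ℂ)) 1).mpr
    simpa using h2
  have hsum := h1'.sub h2'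
  have htsum : (∑' n : ℕ,
      ((B ^ (n + 1) - A ^ (n + 1)).natAbs : ℂ) * z ^ (n + 1) / ((n : ℂ) + 1)) =
      -Complex.log (1 - w1) - -Complex.log (1 - w2) := by
    rw [← hsum.tsum_eq]
    apply tsum_congr
    intro n
    have hcoef : ((B ^ (n + 1) - A ^ (n + 1)).natAbs : ℂ)
        = ((|B| : ℤ) : ℂ) ^ (n + 1) - ((A * B / |B| : ℤ) : ℂ) ^ (n + 1) := by
      rw [show ((B ^ (n + 1) - A ^ (n + 1)).natAbs : ℂ)
          = (((B ^ (n + 1) - A ^ (n + 1)).natAbs : ℤ) : ℂ) from (Int.cast_natCast _).symm,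
        key_abs A B h (n + 1) (by omega)]
      push_cast
      ring
    rw [hcoef, hw1def, hw2def]
    push_cast
    ring
  rw [htsum]
  have hne1 : 1 - w1 ≠ 0 := by
    intro hh
    have : w1 = 1 := by linear_combination -hh
    rw [this] at hnw1; simp at hnw1
  have hne2 : 1 - w2 ≠ 0 := by
    intro hh
    have : w2 = 1 := by linear_combination -hh
    rw [this] at hnw2'; simp at hnw2'
  rw [show -Complex.log (1 - w1) - -Complex.log (1 - w2)
      = Complex.log (1 - w2) - Complex.log (1 - w1) by ring,
    Complex.exp_sub, Complex.exp_log hne2, Complex.exp_log hne1]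

lemma natAbs_sub_comm' (a b : ℤ) : (a - b).natAbs = (b - a).natAbs := by
  rw [← Int.natAbs_neg, neg_sub]

/-- For the endomorphisms `φ(x) = d_φ·x`, `ψ(x) = d_ψ·x` of `ℤ`:
(i) for `n ≥ 1`, `R(φⁿ,ψⁿ) = |d_ψⁿ - d_φⁿ|` when `d_φⁿ ≠ d_ψⁿ`, and the set of
`(φⁿ,ψⁿ)`-conjugacy classes is infinite otherwise;
(ii) the pair is tame iff `|d_φ| ≠ |d_ψ|`, and then, with
`d₁ = max(|d_φ|,|d_ψ|)` and `d₂ = d_φ d_ψ / d₁`, the coincidence Reidemeister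
zeta function equals `(1 - d₂ z)/(1 - d₁ z)` for `|z| < 1/d₁`. -/
theorem coincidence_reidemeister_zeta_int (dphi dpsi : ℤ) :
    (∀ n : ℕ, 1 ≤ n →
      (dphi ^ n ≠ dpsi ^ n →
        Nat.card (Quot (fun x y : ℤ =>
          ∃ g : ℤ, y = x + dpsi ^ n * g - dphi ^ n * g)) =
          (dpsi ^ n - dphi ^ n).natAbs) ∧
      (dphi ^ n = dpsi ^ n →
        Infinite (Quot (fun x y : ℤ =>
          ∃ g : ℤ, y = x + dpsi ^ n * g - dphi ^ n * g)))) ∧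
    ((∀ n : ℕ, 1 ≤ n →
        Finite (Quot (fun x y : ℤ => ∃ g : ℤ, y = x + dpsi ^ n * g - dphi ^ n * g))) ↔
      |dphi| ≠ |dpsi|) ∧
    (|dphi| ≠ |dpsi| →
      ∀ z : ℂ, ‖z‖ < 1 / ((max |dphi| |dpsi| : ℤ) : ℝ) →
        Complex.exp (∑' n : ℕ,
          ((dpsi ^ (n + 1) - dphi ^ (n + 1)).natAbs : ℂ) * z ^ (n + 1) / ((n : ℂ) + 1)) =
        (1 - ((dphi * dpsi / max |dphi| |dpsi| : ℤ) : ℂ) * z) /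
          (1 - ((max |dphi| |dpsi| : ℤ) : ℂ) * z)) := by
  refine ⟨fun n hn => ⟨fun _ => quot_card_aux _ _, fun heq => quot_infinite_aux _ _ heq⟩,
    ⟨?_, ?_⟩, ?_⟩
  · intro hfin
    intro habs
    have h2 : dphi ^ 2 = dpsi ^ 2 := by rw [← sq_abs dphi, ← sq_abs dpsi, habs]
    have hinf := quot_infinite_aux (dphi ^ 2) (dpsi ^ 2) h2
    exact (hfin 2 one_le_two).not_infinite hinf
  · intro hne n hn
    have hm : dpsi ^ n - dphi ^ n ≠ 0 := by
      intro h0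
      have heq : dphi ^ n = dpsi ^ n := by linarith
      have hnat : dphi.natAbs ^ n = dpsi.natAbs ^ n := by
        have := congrArg Int.natAbs heq
        rwa [Int.natAbs_pow, Int.natAbs_pow] at this
      have : dphi.natAbs = dpsi.natAbs := Nat.pow_left_injective (by omega) hnat
      apply hne
      rw [Int.abs_eq_natAbs, Int.abs_eq_natAbs, this]
    apply Nat.finite_of_card_ne_zero
    rw [quot_card_aux]
    simpa [Int.natAbs_ne_zero] using hm
  · intro hne z hz
    rcases hne.lt_or_gt with hlt | hlt
    · rw [max_eq_right hlt.le] at hz ⊢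
      exact zeta_aux dphi dpsi hlt z hz
    · rw [max_eq_left hlt.le] at hz ⊢
      have hts : (∑' n : ℕ,
          ((dpsi ^ (n + 1) - dphi ^ (n + 1)).natAbs : ℂ) * z ^ (n + 1) / ((n : ℂ) + 1)) =
          (∑' n : ℕ,
          ((dphi ^ (n + 1) - dpsi ^ (n + 1)).natAbs : ℂ) * z ^ (n + 1) / ((n : ℂ) + 1)) :=
        tsum_congr fun n => by rw [natAbs_sub_comm']
      rw [hts, mul_comm dphi dpsi]
      exact zeta_aux dpsi dphi hlt z hz
end

section
/- Let A, B be d×d integer matrices defining endomorphisms φ(x) = A·x, ψ(x) = B·x of the abelian group ℤ^d. Suppose there exists an invertible complex matrix P such that both P⁻¹AP and P⁻¹BP are upper triangular, with diagonal entries ξ₁, …, ξ_d and η₁, …, η_d respectively (so the eigenvalues of Aⁿ − Bⁿ are ξᵢⁿ − ηᵢⁿ). Then for every n ≥ 1 such that ξᵢⁿ ≠ ηᵢⁿ for all 1 ≤ i ≤ d, the Reidemeister coincidence number satisfies R(φⁿ, ψⁿ) = ∏_{i=1}^{d} |ξᵢⁿ − ηᵢⁿ| (complex absolute values; the product is a positive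 integer equal to |det(Aⁿ − Bⁿ)|). -/
/-! Conjugating by `P` makes `Aⁿ - Bⁿ` upper triangular with diagonal `ξᵢⁿ - ηᵢⁿ`, so
`det (Aⁿ - Bⁿ) = ∏ᵢ (ξᵢⁿ - ηᵢⁿ) ≠ 0`. In an abelian group the `(φ, ψ)`-classes are the cosets of
`range (ψ - φ)`, and a nonsingular integer matrix `M` has image of index `|det M|` in `ℤ^d`
(Smith normal form). -/

open Matrix

namespace Matrix

section UpperTriangular

variable {m R : Type*} [Fintype m] [LinearOrder m]

theorem IsUpperTriangular.mul_apply_self [NonUnitalNonAssocSemiring R] {M N : Matrix m m R}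
    (hM : M.IsUpperTriangular) (hN : N.IsUpperTriangular) (i : m) :
    (M * N) i i = M i i * N i i := by
  rw [mul_apply, Finset.sum_eq_single i]
  · intro j _ hji
    rcases hji.lt_or_gt with h | h
    · rw [hM h, zero_mul]
    · rw [hN h, mul_zero]
  · simp

theorem IsUpperTriangular.pow_apply_self [DecidableEq m] [Semiring R] {M : Matrix m m R}
    (hM : M.IsUpperTriangular) (n : ℕ) (i : m) : (M ^ n) i i = M i i ^ n := by
  induction n with
  | zero => simp
  | succ n ih => rw [pow_succ, IsUpperTriangular.mul_apply_self (hM.pow n) hM, ih, pow_succ]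

end UpperTriangular

variable {m R : Type*} [Fintype m] [DecidableEq m] [CommRing R]

theorem conj_pow_of_isUnit {P : Matrix m m R} (hP : IsUnit P) (X : Matrix m m R) (n : ℕ) :
    (P⁻¹ * X * P) ^ n = P⁻¹ * X ^ n * P := by
  rw [← hP.unit_spec, ← coe_units_inv]
  exact Units.conj_pow' _ _ _

theorem det_pow_sub_pow_of_isUpperTriangular_conj [LinearOrder m] {A B P : Matrix m m R}
    (hP : IsUnit P) (hA : (P⁻¹ * A * P).IsUpperTriangular)
    (hB : (P⁻¹ * B * P).IsUpperTriangular) (n : ℕ) :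
    (A ^ n - B ^ n).det = ∏ i, ((P⁻¹ * A * P) i i ^ n - (P⁻¹ * B * P) i i ^ n) := by
  have hconj : P⁻¹ * (A ^ n - B ^ n) * P = (P⁻¹ * A * P) ^ n - (P⁻¹ * B * P) ^ n := by
    rw [conj_pow_of_isUnit hP, conj_pow_of_isUnit hP, Matrix.mul_sub, Matrix.sub_mul]
  rw [← det_conj' hP, hconj, det_of_isUpperTriangular ((hA.pow n).sub (hB.pow n))]
  simp only [sub_apply, hA.pow_apply_self, hB.pow_apply_self]

theorem index_range_toLin' (M : Matrix m m ℤ) (hM : M.det ≠ 0) :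
    (LinearMap.range M.toLin').toAddSubgroup.index = M.det.natAbs := by
  have hinj : Function.Injective M.toLin' :=
    mulVec_injective_of_det_mem_nonZeroDivisors (mem_nonZeroDivisors_of_ne_zero hM)
  change Nat.card ((m → ℤ) ⧸ LinearMap.range M.toLin') = _
  rw [← Submodule.natAbs_det_equiv _ (LinearEquiv.ofInjective _ hinj), ← LinearMap.det_toLin' M]
  rfl

end Matrix

theorem AddMonoidHom.natCard_quot_coincidence_eq_index {G : Type*} [AddCommGroup G]
    (φ ψ : G →+ G) :
    Nat.card (Quot fun x y : G => ∃ g, y = x + ψ g - φ g) = (ψ - φ).range.index := by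
  refine Nat.card_congr (Quot.congrRight fun x y => ?_)
  rw [QuotientAddGroup.leftRel_apply]
  constructor
  · rintro ⟨g, rfl⟩
    exact ⟨g, by simp only [sub_apply]; abel⟩
  · rintro ⟨g, hg⟩
    exact ⟨g, by rw [add_sub_assoc, ← sub_apply, hg]; abel⟩

theorem Matrix.natCard_quot_coincidence_mulVec_eq_natAbs_det {m : Type*} [Fintype m]
    [DecidableEq m] {A B : Matrix m m ℤ} (hAB : (A - B).det ≠ 0) :
    Nat.card (Quot fun x y : m → ℤ => ∃ g, y = x + B *ᵥ g - A *ᵥ g) = (A - B).det.natAbs := by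
  have hsub : B.mulVecLin.toAddMonoidHom - A.mulVecLin.toAddMonoidHom =
      (toLin' (B - A)).toAddMonoidHom := by
    refine AddMonoidHom.ext fun g => ?_
    simp only [LinearMap.toAddMonoidHom_coe, AddMonoidHom.sub_apply, mulVecLin_apply,
      toLin'_apply, sub_mulVec]
  have hBA : (B - A).det ≠ 0 := by
    rwa [← neg_sub, det_neg, mul_ne_zero_iff, and_iff_right (by simp)] at hAB
  refine (A.mulVecLin.toAddMonoidHom.natCard_quot_coincidence_eq_index
    B.mulVecLin.toAddMonoidHom).trans ?_
  rw [hsub, ← LinearMap.range_toAddSubgroup, index_range_toLin' _ hBA, ← neg_sub, det_neg,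
    Int.natAbs_mul, Int.natAbs_pow, Int.natAbs_neg, Int.natAbs_one, one_pow, one_mul]

/-- Let `A, B` be `d×d` integer matrices acting on `ℤ^d`, simultaneously
triangularisable over `ℂ` by an invertible matrix `P` with diagonal entries
`ξᵢ` and `ηᵢ` respectively. Then for every `n ≥ 1` with `ξᵢⁿ ≠ ηᵢⁿ` for all `i`,
the coincidence Reidemeister number of `(φⁿ, ψⁿ)` equals `∏ᵢ |ξᵢⁿ - ηᵢⁿ|`, a
positive integer equal to `|det(Aⁿ - Bⁿ)|`. -/
theorem coincidence_reidemeister_number_triangularizable (d : ℕ)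
    (A B : Matrix (Fin d) (Fin d) ℤ) (P : Matrix (Fin d) (Fin d) ℂ) (hP : IsUnit P)
    (ξ η : Fin d → ℂ)
    (hA : (P⁻¹ * A.map (Int.cast : ℤ → ℂ) * P).BlockTriangular (id : Fin d → Fin d))
    (hB : (P⁻¹ * B.map (Int.cast : ℤ → ℂ) * P).BlockTriangular (id : Fin d → Fin d))
    (hξ : ∀ i, (P⁻¹ * A.map (Int.cast : ℤ → ℂ) * P) i i = ξ i)
    (hη : ∀ i, (P⁻¹ * B.map (Int.cast : ℤ → ℂ) * P) i i = η i) :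
    ∀ n : ℕ, 1 ≤ n → (∀ i, ξ i ^ n ≠ η i ^ n) →
      (Nat.card (Quot (fun x y : Fin d → ℤ =>
          ∃ g : Fin d → ℤ, y = x + (B ^ n).mulVec g - (A ^ n).mulVec g)) : ℝ) =
        ∏ i : Fin d, ‖ξ i ^ n - η i ^ n‖ ∧
      Nat.card (Quot (fun x y : Fin d → ℤ =>
          ∃ g : Fin d → ℤ, y = x + (B ^ n).mulVec g - (A ^ n).mulVec g)) =
        ((A ^ n - B ^ n).det).natAbs := by
  intro n _ hne
  have hdet : (((A ^ n - B ^ n).det : ℤ) : ℂ) = ∏ i, (ξ i ^ n - η i ^ n) := by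
    have hmap : (A ^ n - B ^ n).map (Int.cast : ℤ → ℂ) = A.map Int.cast ^ n - B.map Int.cast ^ n :=
      by simp only [← Int.coe_castRingHom, ← RingHom.mapMatrix_apply, map_sub, map_pow]
    rw [Int.cast_det, hmap, det_pow_sub_pow_of_isUpperTriangular_conj hP hA hB]
    simp only [hξ, hη]
  have hdet_ne : (A ^ n - B ^ n).det ≠ 0 := by
    rw [← Int.cast_ne_zero (α := ℂ), hdet]
    exact Finset.prod_ne_zero_iff.2 fun i _ => sub_ne_zero.2 (hne i)
  have hcard := natCard_quot_coincidence_mulVec_eq_natAbs_det hdet_ne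
  refine ⟨?_, hcard⟩
  rw [hcard, ← norm_prod, ← hdet, Complex.norm_intCast, Nat.cast_natAbs, Int.cast_abs]
end
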